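/- arXiv:2506.03441 — 6 statements merged into one kernel-verified Lean document; each statement's English description precedes it below -/
import Mathlib

section
/- For any weighted graph G with nonnegative edge weights, the largest eigenvalue of the signless Laplacian Q(G) = D(G) + A(G) is at most twice the largest eigenvalue of the Laplacian L(G) = D(G) - A(G), i.e., λ_max(Q(G))/2 ≤ λ_max(L(G)). -/
open Matrix Finset

noncomputable section

/-- Weighted adjacency matrix of a graph on `Fin n` given by a weight function. -/
def adjMat {n : ℕ} (w : Fin n → Fin n → ℝ) : Matrix (Fin n) (Fin n) ℝ := Matrix.of w

/-- Diagonal weighted-degree matrix. -/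
def degMat {n : ℕ} (w : Fin n → Fin n → ℝ) : Matrix (Fin n) (Fin n) ℝ :=
  Matrix.diagonal fun i => ∑ j, w i j

/-- Weighted Laplacian `L = D - A`. -/
def lapMat {n : ℕ} (w : Fin n → Fin n → ℝ) : Matrix (Fin n) (Fin n) ℝ :=
  degMat w - adjMat w

/-- Weighted signless Laplacian `Q = D + A`. -/
def slapMat {n : ℕ} (w : Fin n → Fin n → ℝ) : Matrix (Fin n) (Fin n) ℝ :=
  degMat w + adjMat w

/-- The largest eigenvalue of a real matrix, as the supremum of its real spectrum. -/
def maxEig {n : ℕ} (M : Matrix (Fin n) (Fin n) ℝ) : ℝ := sSup (spectrum ℝ M)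

/-!
The Laplacian `L = D - A` is positive semidefinite, its quadratic form being
`½ ∑ w i j (x i - x j)²`, so `Q = 2D - L ≤ 2D` in the Loewner order. Without loops each degree
`d i = L i i` is a diagonal entry of `L`, hence at most `λ_max(L)`; so `2D ≤ 2 λ_max(L) • 1`
and `λ_max(Q) ≤ 2 λ_max(L)`.
-/

open scoped MatrixOrder

section SpectralBound

variable {A : Type*} [Ring A] [PartialOrder A] [Algebra ℝ A] [NonnegSpectrumClass ℝ A]

lemma sSup_spectrum_nonneg {a : A} (ha : 0 ≤ a) : 0 ≤ sSup (spectrum ℝ a) :=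
  Real.sSup_nonneg fun _ hx => spectrum_nonneg_of_nonneg ha hx

variable [StarRing A] [StarOrderedRing A] [TopologicalSpace A]
  [ContinuousFunctionalCalculus ℝ A IsSelfAdjoint]

lemma le_algebraMap_sSup_spectrum {a : A} (ha : IsSelfAdjoint a) :
    a ≤ algebraMap ℝ A (sSup (spectrum ℝ a)) :=
  (le_algebraMap_iff_spectrum_le ha).2 fun _ hx =>
    le_csSup (ContinuousFunctionalCalculus.isCompact_spectrum a).bddAbove hx

lemma sSup_spectrum_le_of_le_algebraMap {a : A} {r : ℝ} (ha : IsSelfAdjoint a)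
    (h : a ≤ algebraMap ℝ A r) (hr : 0 ≤ r) : sSup (spectrum ℝ a) ≤ r :=
  Real.sSup_le ((le_algebraMap_iff_spectrum_le ha).1 h) hr

end SpectralBound

namespace Matrix

variable {ι : Type*} [Fintype ι] [DecidableEq ι]

lemma diagonal_le_algebraMap {d : ι → ℝ} {r : ℝ} (h : ∀ i, d i ≤ r) :
    diagonal d ≤ algebraMap ℝ (Matrix ι ι ℝ) r := by
  rw [le_iff, algebraMap_eq_diagonal, Pi.algebraMap_def, diagonal_sub]
  exact posSemidef_diagonal_iff.2 fun i => sub_nonneg.2 (h i)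

lemma diag_le_sSup_spectrum {A : Matrix ι ι ℝ} (hA : A.IsHermitian) (i : ι) :
    A i i ≤ sSup (spectrum ℝ A) := by
  simpa [algebraMap_eq_diagonal] using
    (le_iff.1 (le_algebraMap_sSup_spectrum hA.isSelfAdjoint)).diag_nonneg (i := i)

end Matrix

open Matrix

section WeightedGraph

variable {n : ℕ} {w : Fin n → Fin n → ℝ}

lemma adjMat_isHermitian (hsymm : ∀ i j, w i j = w j i) : (adjMat w).IsHermitian := by
  ext i j; simp [adjMat, hsymm j i]

lemma degMat_isHermitian : (degMat w).IsHermitian := isHermitian_diagonal _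

lemma lapMat_isHermitian (hsymm : ∀ i j, w i j = w j i) : (lapMat w).IsHermitian :=
  degMat_isHermitian.sub (adjMat_isHermitian hsymm)

lemma slapMat_isHermitian (hsymm : ∀ i j, w i j = w j i) : (slapMat w).IsHermitian :=
  degMat_isHermitian.add (adjMat_isHermitian hsymm)

lemma slapMat_eq_degMat_add_degMat_sub_lapMat : slapMat w = degMat w + degMat w - lapMat w := by
  rw [slapMat, lapMat]; abel

lemma lapMat_apply_self (hdiag : ∀ i, w i i = 0) (i : Fin n) : lapMat w i i = ∑ j, w i j := by
  simp [lapMat, degMat, adjMat, hdiag]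

lemma dotProduct_lapMat_mulVec (hsymm : ∀ i j, w i j = w j i) (x : Fin n → ℝ) :
    x ⬝ᵥ (lapMat w *ᵥ x) = (∑ i, ∑ j, w i j * (x i - x j) ^ 2) / 2 := by
  have hform : x ⬝ᵥ (lapMat w *ᵥ x) = ∑ i, ∑ j, w i j * (x i ^ 2 - x i * x j) := by
    rw [lapMat, sub_mulVec, dotProduct_sub, degMat]
    simp only [dotProduct, mulVec_diagonal]
    simp only [adjMat, mulVec, dotProduct, of_apply, mul_sum, sum_mul, ← sum_sub_distrib]
    exact sum_congr rfl fun i _ => sum_congr rfl fun j _ => by ring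
  have hswap : ∑ i, ∑ j, w i j * (x j ^ 2 - x j * x i) =
      ∑ i, ∑ j, w i j * (x i ^ 2 - x i * x j) := by
    rw [sum_comm]
    simp_rw [hsymm _ (_ : Fin n)]
  have hsplit : ∑ i, ∑ j, w i j * (x i - x j) ^ 2 =
      ∑ i, ∑ j, w i j * (x i ^ 2 - x i * x j) + ∑ i, ∑ j, w i j * (x j ^ 2 - x j * x i) := by
    simp only [← sum_add_distrib]
    exact sum_congr rfl fun i _ => sum_congr rfl fun j _ => by ring
  rw [hform, hsplit, hswap]
  ring

lemma lapMat_posSemidef (hsymm : ∀ i j, w i j = w j i) (hnonneg : ∀ i j, 0 ≤ w i j) :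
    (lapMat w).PosSemidef :=
  .of_dotProduct_mulVec_nonneg (lapMat_isHermitian hsymm) fun x => by
    rw [star_trivial, dotProduct_lapMat_mulVec hsymm]
    exact div_nonneg (sum_nonneg fun i _ => sum_nonneg fun j _ =>
      mul_nonneg (hnonneg i j) (sq_nonneg (x i - x j))) zero_le_two

end WeightedGraph

/-- For any weighted graph `G` with nonnegative edge weights,
`λ_max(Q(G)) / 2 ≤ λ_max(L(G))`. -/
theorem slap_maxEig_half_le_lap_maxEig {n : ℕ} (w : Fin n → Fin n → ℝ)
    (hsymm : ∀ i j, w i j = w j i) (hnonneg : ∀ i j, 0 ≤ w i j)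
    (hdiag : ∀ i, w i i = 0) :
    maxEig (slapMat w) / 2 ≤ maxEig (lapMat w) := by
  have hL := lapMat_posSemidef hsymm hnonneg
  have hD : degMat w ≤ algebraMap ℝ _ (maxEig (lapMat w)) :=
    diagonal_le_algebraMap fun i => lapMat_apply_self hdiag i ▸ diag_le_sSup_spectrum hL.1 i
  have hQ : slapMat w ≤ algebraMap ℝ _ (2 * maxEig (lapMat w)) :=
    calc slapMat w = degMat w + degMat w - lapMat w := slapMat_eq_degMat_add_degMat_sub_lapMat
      _ ≤ degMat w + degMat w := sub_le_self _ hL.nonneg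
      _ ≤ _ := by rw [two_mul, map_add]; exact add_le_add hD hD
  have hL0 : 0 ≤ maxEig (lapMat w) := sSup_spectrum_nonneg hL.nonneg
  have hQL : maxEig (slapMat w) ≤ 2 * maxEig (lapMat w) :=
    sSup_spectrum_le_of_le_algebraMap (slapMat_isHermitian hsymm).isSelfAdjoint hQ
      (by positivity)
  linarith
end
end

section
/- If G is a bipartite graph, then for any 1 ≤ k ≤ n, the k-th token graph F_k(G) is bipartite. -/
open Finset

noncomputable section

/-- The `k`-th token graph of a simple graph `G` on `Fin n`: vertices are the `k`-element
subsets of the vertex set, with `A ~ B` iff the symmetric difference of `A` and `B` is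
`{a, b}` with `a ∈ A`, `b ∈ B` and `(a,b)` an edge of `G`. -/
def tokenGraph {n : ℕ} (G : SimpleGraph (Fin n)) (k : ℕ) :
    SimpleGraph {s : Finset (Fin n) // s.card = k} :=
  SimpleGraph.fromRel fun A B =>
    ∃ a ∈ A.1 \ B.1, ∃ b ∈ B.1 \ A.1, A.1 \ {a} = B.1 \ {b} ∧ G.Adj a b

/-! Colour a set of tokens by the sum of the colours of its vertices: moving one token along
an edge replaces one summand by a different one, so the sum changes. With colours in `Fin 2`
this is the parity of the number of tokens on one side of the bipartition. -/

theorem Finset.sum_ne_sum_of_sdiff_singleton_eq {ι M : Type*} [DecidableEq ι]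
    [AddCancelCommMonoid M] {f : ι → M} {A B : Finset ι} {a b : ι} (ha : a ∈ A) (hb : b ∈ B)
    (hAB : A \ {a} = B \ {b}) (hf : f a ≠ f b) :
    ∑ v ∈ A, f v ≠ ∑ v ∈ B, f v := by
  rw [← sum_erase_add _ _ ha, ← sum_erase_add _ _ hb, ← sdiff_singleton_eq_erase,
    ← sdiff_singleton_eq_erase, hAB]
  exact fun h => hf (add_left_cancel h)

theorem tokenGraph.exists_of_adj {n k : ℕ} {G : SimpleGraph (Fin n)}
    {A B : {s : Finset (Fin n) // s.card = k}} (h : (tokenGraph G k).Adj A B) :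
    ∃ a ∈ A.1, ∃ b ∈ B.1, A.1 \ {a} = B.1 \ {b} ∧ G.Adj a b := by
  rw [tokenGraph, SimpleGraph.fromRel_adj] at h
  rcases h.2 with ⟨a, ha, b, hb, hAB, hG⟩ | ⟨b, hb, a, ha, hBA, hG⟩
  · exact ⟨a, (mem_sdiff.1 ha).1, b, (mem_sdiff.1 hb).1, hAB, hG⟩
  · exact ⟨a, (mem_sdiff.1 ha).1, b, (mem_sdiff.1 hb).1, hBA.symm, hG.symm⟩

def tokenGraph.sumColoring {n : ℕ} {G : SimpleGraph (Fin n)} {α : Type*}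
    [AddCancelCommMonoid α] (C : G.Coloring α) (k : ℕ) : (tokenGraph G k).Coloring α :=
  SimpleGraph.Coloring.mk (fun A => ∑ v ∈ A.1, C v) fun h => by
    obtain ⟨a, ha, b, hb, hAB, hG⟩ := tokenGraph.exists_of_adj h
    exact sum_ne_sum_of_sdiff_singleton_eq ha hb hAB (C.valid hG)

theorem tokenGraph_bipartite_general {n : ℕ} (G : SimpleGraph (Fin n)) (hG : G.Colorable 2)
    (k : ℕ) :
    (tokenGraph G k).Colorable 2 :=
  let ⟨C⟩ := hG
  ⟨tokenGraph.sumColoring C k⟩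

/-- If `G` is bipartite (2-colorable), then for any `1 ≤ k ≤ n` the `k`-th token graph
`F_k(G)` is bipartite. -/
theorem tokenGraph_bipartite {n : ℕ} (G : SimpleGraph (Fin n)) (hG : G.Colorable 2)
    (k : ℕ) (hk : 1 ≤ k) (hkn : k ≤ n) :
    (tokenGraph G k).Colorable 2 :=
  tokenGraph_bipartite_general G hG k
end
end

section
/- For any weighted graph G on n vertices and any 1 ≤ k ≤ n/2 - 1, every eigenvalue of the Laplacian of the k-th token graph F_k(G) is also an eigenvalue of the Laplacian of the (k+1)-th token graph F_{k+1}(G). Specifically, if v is an eigenvector of L(F_k(G)) with eigenvalue λ, then the vector v' defined on (k+1)-subsets S by v'(S) = Σ_{X ⊂ S, |X|=k} v(X) satisfies L(F_{k+1}(G)) v' = λ v'. -/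
open Matrix Finset

noncomputable section

/-- Edge weight between vertices `A`, `B` of a token graph: nonzero exactly when the
symmetric difference of `A` and `B` is an edge `{a, b}` of `G` with `a ∈ A`, `b ∈ B`,
in which case it is `w a b`. -/
def tokenW {n : ℕ} (w : Fin n → Fin n → ℝ) (A B : Finset (Fin n)) : ℝ :=
  ∑ a ∈ A \ B, ∑ b ∈ B \ A, if A \ {a} = B \ {b} then w a b else 0

/-- Vertices of the `k`-th token graph on `[n]`: the `k`-element subsets. -/
abbrev TokenVert (n k : ℕ) := {s : Finset (Fin n) // s.card = k}

/-- Weighted adjacency matrix of the `k`-th token graph `F_k(G)`. -/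
def tokenA {n : ℕ} (w : Fin n → Fin n → ℝ) (k : ℕ) :
    Matrix (TokenVert n k) (TokenVert n k) ℝ :=
  Matrix.of fun A B => tokenW w A.1 B.1

/-- Weighted degree matrix of `F_k(G)`. -/
def tokenD {n : ℕ} (w : Fin n → Fin n → ℝ) (k : ℕ) :
    Matrix (TokenVert n k) (TokenVert n k) ℝ :=
  Matrix.diagonal fun A => ∑ B : TokenVert n k, tokenW w A.1 B.1

/-- Weighted Laplacian of `F_k(G)`. -/
def tokenL {n : ℕ} (w : Fin n → Fin n → ℝ) (k : ℕ) :
    Matrix (TokenVert n k) (TokenVert n k) ℝ :=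
  tokenD w k - tokenA w k

/-- Weighted signless Laplacian of `F_k(G)`. -/
def tokenQ {n : ℕ} (w : Fin n → Fin n → ℝ) (k : ℕ) :
    Matrix (TokenVert n k) (TokenVert n k) ℝ :=
  tokenD w k + tokenA w k

/-!
Extend functions on `k`-sets by zero to all sets. The Laplacian of `F_k(G)` then acts by a
formula that does not depend on `k` (`setLaplacian`), and the lift `v ↦ v'` is the up operator
`f ↦ (S ↦ ∑_{c ∈ S} f (S - c))`. For symmetric `w` the two commute: expanding
`(L f)(S - c)` summed over `c ∈ S`, the moves of a token onto the removed vertex `c` cancel in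
pairs, and the other moves are exactly those of `L (up f)` at `S`. Hence
`L_{k+1} v' = (L_k v)' = λ v'`.
-/

namespace Finset

theorem sum_sum_erase_comm {α M : Type*} [DecidableEq α] [AddCommMonoid M] (s : Finset α)
    (f : α → α → M) :
    ∑ a ∈ s, ∑ b ∈ s.erase a, f a b = ∑ b ∈ s, ∑ a ∈ s.erase b, f a b := by
  refine sum_comm' fun a b => ?_
  simp only [mem_erase]
  tauto

theorem sum_sum_mul_sub_eq_zero {α : Type*} (s : Finset α) {w : α → α → ℝ}
    (hw : ∀ a b, w a b = w b a) (g : α → ℝ) :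
    ∑ a ∈ s, ∑ b ∈ s, w a b * (g a - g b) = 0 := by
  have h : ∑ a ∈ s, ∑ b ∈ s, w a b * (g a - g b)
      = -∑ a ∈ s, ∑ b ∈ s, w a b * (g a - g b) := by
    conv_lhs => rw [sum_comm]
    simp only [← sum_neg_distrib, hw]
    exact sum_congr rfl fun _ _ => sum_congr rfl fun _ _ => by ring
  linarith

theorem eq_insert_erase_iff {α : Type*} [DecidableEq α] {S T : Finset α} {a b : α}
    (ha : a ∈ S) (hb : b ∉ S) :
    T = insert b (S.erase a) ↔ a ∉ T ∧ b ∈ T ∧ S \ {a} = T \ {b} := by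
  have hb' : b ∉ S.erase a := fun h => hb (mem_of_mem_erase h)
  rw [← erase_eq, ← erase_eq]
  constructor
  · rintro rfl
    refine ⟨?_, mem_insert_self b _, (erase_insert hb').symm⟩
    rw [mem_insert, not_or]
    exact ⟨fun h => hb (h ▸ ha), notMem_erase a S⟩
  · rintro ⟨-, hbT, h⟩
    rw [h, insert_erase hbT]

end Finset

section SetLaplacian

variable {α : Type*} [DecidableEq α]

def upSum (f : Finset α → ℝ) (S : Finset α) : ℝ :=
  ∑ c ∈ S, f (S.erase c)

def setLaplacian [Fintype α] (w : α → α → ℝ) (f : Finset α → ℝ) (S : Finset α) : ℝ :=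
  ∑ a ∈ S, ∑ b ∈ Sᶜ, w a b * (f S - f (insert b (S.erase a)))

theorem upSum_sub_upSum_insert_erase (f : Finset α → ℝ) {S : Finset α} {a b : α}
    (ha : a ∈ S) (hb : b ∉ S) :
    upSum f S - upSum f (insert b (S.erase a))
      = ∑ c ∈ S.erase a, (f (S.erase c) - f (insert b ((S.erase c).erase a))) := by
  have hb' : b ∉ S.erase a := fun h => hb (mem_of_mem_erase h)
  have hins : ∀ c ∈ S.erase a,
      (insert b (S.erase a)).erase c = insert b ((S.erase c).erase a) := fun c hc => by
    rw [erase_insert_of_ne (ne_of_mem_of_not_mem hc hb').symm, erase_right_comm]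
  rw [upSum, upSum, sum_insert hb', erase_insert hb', ← add_sum_erase _ _ ha,
    sum_congr rfl fun c hc => congrArg f (hins c hc), add_sub_add_left_eq_sub,
    ← sum_sub_distrib]

variable [Fintype α]

theorem setLaplacian_erase (w : α → α → ℝ) (f : Finset α → ℝ) {S : Finset α} {c : α}
    (hc : c ∈ S) :
    setLaplacian w f (S.erase c)
      = ∑ a ∈ S.erase c, (w a c * (f (S.erase c) - f (S.erase a))
          + ∑ b ∈ Sᶜ, w a b * (f (S.erase c) - f (insert b ((S.erase c).erase a)))) := by
  refine sum_congr rfl fun a ha => ?_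
  have hac : a ≠ c := ne_of_mem_erase ha
  rw [compl_erase, sum_insert (fun h => mem_compl.1 h hc), erase_right_comm,
    insert_erase (mem_erase.2 ⟨hac.symm, hc⟩), erase_right_comm]

theorem setLaplacian_upSum {w : α → α → ℝ} (hw : ∀ a b, w a b = w b a)
    (f : Finset α → ℝ) (S : Finset α) :
    setLaplacian w (upSum f) S = upSum (setLaplacian w f) S := by
  have hcancel :
      ∑ c ∈ S, ∑ a ∈ S.erase c, w a c * (f (S.erase c) - f (S.erase a)) = 0 := by
    rw [← sum_sum_mul_sub_eq_zero S hw fun c => f (S.erase c)]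
    refine sum_congr rfl fun c hc => ?_
    rw [← sum_erase_add _ _ hc, sub_self, mul_zero, add_zero]
    exact sum_congr rfl fun a _ => by rw [hw]
  calc setLaplacian w (upSum f) S
      = ∑ a ∈ S, ∑ c ∈ S.erase a, ∑ b ∈ Sᶜ,
          w a b * (f (S.erase c) - f (insert b ((S.erase c).erase a))) := by
        refine sum_congr rfl fun a ha => ?_
        rw [sum_comm]
        refine sum_congr rfl fun b hb => ?_
        rw [upSum_sub_upSum_insert_erase f ha (mem_compl.1 hb), mul_sum]
    _ = ∑ c ∈ S, ∑ a ∈ S.erase c, ∑ b ∈ Sᶜ,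
          w a b * (f (S.erase c) - f (insert b ((S.erase c).erase a))) :=
        sum_sum_erase_comm S _
    _ = upSum (setLaplacian w f) S := by
        rw [upSum, sum_congr rfl fun c hc => setLaplacian_erase w f hc]
        simp only [sum_add_distrib, hcancel, zero_add]

end SetLaplacian

section TokenGraph

variable {n : ℕ}

theorem tokenW_eq (w : Fin n → Fin n → ℝ) (S T : Finset (Fin n)) :
    tokenW w S T = ∑ a ∈ S, ∑ b ∈ Sᶜ, if T = insert b (S.erase a) then w a b else 0 := by
  have hTS : T \ S = Sᶜ.filter (· ∈ T) := by ext; simp [and_comm]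
  rw [tokenW, sdiff_eq_filter, hTS, sum_filter]
  refine sum_congr rfl fun a ha => ?_
  rw [sum_filter]
  split_ifs with haT
  · exact (sum_eq_zero fun b hb => by
      simp only [eq_insert_erase_iff ha (mem_compl.1 hb), haT, not_true_eq_false, false_and,
        if_false]).symm
  · exact sum_congr rfl fun b hb => by
      simp only [eq_insert_erase_iff ha (mem_compl.1 hb), haT, not_false_eq_true, true_and,
        ite_and]

theorem sum_tokenW_mul {m : ℕ} (w : Fin n → Fin n → ℝ) {S : Finset (Fin n)} (hS : S.card = m)
    (g : Finset (Fin n) → ℝ) :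
    ∑ T : TokenVert n m, tokenW w S T.1 * g T.1
      = ∑ a ∈ S, ∑ b ∈ Sᶜ, w a b * g (insert b (S.erase a)) := by
  simp only [tokenW_eq, sum_mul, ite_mul, zero_mul]
  rw [sum_comm]
  refine sum_congr rfl fun a ha => ?_
  rw [sum_comm]
  refine sum_congr rfl fun b hb => ?_
  have hcard : (insert b (S.erase a)).card = m := by
    rw [card_insert_of_notMem fun h => mem_compl.1 hb (mem_of_mem_erase h),
      card_erase_of_mem ha, hS]
    exact Nat.succ_pred_eq_of_pos (hS ▸ card_pos.2 ⟨a, ha⟩)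
  rw [Fintype.sum_eq_single (⟨_, hcard⟩ : TokenVert n m)
    fun T hT => if_neg fun h => hT (Subtype.ext h), if_pos rfl]

theorem tokenL_mulVec_apply {m : ℕ} (w : Fin n → Fin n → ℝ) (f : Finset (Fin n) → ℝ)
    (S : TokenVert n m) :
    (tokenL w m *ᵥ fun T => f T.1) S = setLaplacian w f S.1 := by
  rw [tokenL, sub_mulVec, Pi.sub_apply, tokenD, mulVec_diagonal, setLaplacian,
    ← sum_tokenW_mul w S.2 fun T => f S.1 - f T]
  simp only [tokenA, mulVec, dotProduct, of_apply, sum_mul, mul_sub, ← sum_sub_distrib]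

theorem sum_subset_eq_upSum {k : ℕ} (f : Finset (Fin n) → ℝ) {S : Finset (Fin n)}
    (hS : S.card = k + 1) :
    ∑ X : TokenVert n k, (if X.1 ⊆ S then f X.1 else 0) = upSum f S := by
  have hcard : ∀ c ∈ S, (S.erase c).card = k := fun c hc => by
    rw [card_erase_of_mem hc, hS, Nat.add_sub_cancel]
  rw [← sum_filter, upSum]
  refine (sum_bij (fun c hc => ⟨S.erase c, hcard c hc⟩)
    (fun c _ => mem_filter.2 ⟨mem_univ _, erase_subset c S⟩)
    (fun c hc c' _ h => (erase_inj S hc).1 (congrArg Subtype.val h)) ?_ fun _ _ => rfl).symm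
  intro X hX
  have hXS : X.1 ⊆ S := (mem_filter.1 hX).2
  obtain ⟨c, hc⟩ : (S \ X.1).Nonempty := by
    rw [← card_pos, card_sdiff_of_subset hXS, hS, X.2]
    omega
  obtain ⟨hcS, hcX⟩ := mem_sdiff.1 hc
  refine ⟨c, hcS, Subtype.ext (eq_of_subset_of_card_le (subset_erase.2 ⟨hXS, hcX⟩) ?_).symm⟩
  rw [hcard c hcS, X.2]

end TokenGraph

theorem tokenL_spectrum_containment_general {n k : ℕ}
    (w : Fin n → Fin n → ℝ)
    (hsymm : ∀ i j, w i j = w j i)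
    (v : TokenVert n k → ℝ) (lam : ℝ)
    (hv : (tokenL w k).mulVec v = lam • v) :
    (tokenL w (k + 1)).mulVec
        (fun S : TokenVert n (k + 1) =>
          ∑ X : TokenVert n k, if X.1 ⊆ S.1 then v X else 0)
      = lam • (fun S : TokenVert n (k + 1) =>
          ∑ X : TokenVert n k, if X.1 ⊆ S.1 then v X else 0) := by
  set V : Finset (Fin n) → ℝ := fun A => if h : A.card = k then v ⟨A, h⟩ else 0
  have hvV : v = fun X => V X.1 := funext fun X => by simp only [V, dif_pos X.2]
  have hlift : (fun S : TokenVert n (k + 1) =>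
      ∑ X : TokenVert n k, if X.1 ⊆ S.1 then v X else 0) = fun S => upSum V S.1 := by
    rw [hvV]
    exact funext fun S => sum_subset_eq_upSum V S.2
  rw [hlift]
  funext S
  rw [tokenL_mulVec_apply, setLaplacian_upSum hsymm, Pi.smul_apply, smul_eq_mul, upSum, upSum,
    mul_sum]
  refine sum_congr rfl fun c hc => ?_
  have hcard : (S.1.erase c).card = k := by rw [card_erase_of_mem hc, S.2, Nat.add_sub_cancel]
  have hvc := congrFun hv ⟨S.1.erase c, hcard⟩
  rwa [hvV, tokenL_mulVec_apply] at hvc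

/-- Eigenvalue lifting for token-graph Laplacians: if `v` is an eigenvector of
`L(F_k(G))` with eigenvalue `lam`, then `v'(S) = Σ_{X ⊂ S, |X| = k} v(X)` satisfies
`L(F_{k+1}(G)) v' = lam • v'`.  In particular every eigenvalue of `L(F_k(G))` is an
eigenvalue of `L(F_{k+1}(G))` for `1 ≤ k ≤ n/2 - 1`. -/
theorem tokenL_spectrum_containment {n k : ℕ} (hk : 1 ≤ k) (hkn : 2 * (k + 1) ≤ n)
    (w : Fin n → Fin n → ℝ)
    (hsymm : ∀ i j, w i j = w j i) (hnonneg : ∀ i j, 0 ≤ w i j)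
    (hdiag : ∀ i, w i i = 0)
    (v : TokenVert n k → ℝ) (lam : ℝ)
    (hv : (tokenL w k).mulVec v = lam • v) :
    (tokenL w (k + 1)).mulVec
        (fun S : TokenVert n (k + 1) =>
          ∑ X : TokenVert n k, if X.1 ⊆ S.1 then v X else 0)
      = lam • (fun S : TokenVert n (k + 1) =>
          ∑ X : TokenVert n k, if X.1 ⊆ S.1 then v X else 0) :=
  tokenL_spectrum_containment_general w hsymm v lam hv
end
end

section
/- The XY Hamiltonian on the star graph S_m has maximum eigenvalue λ_max(H^XY(S_m)) = m/2 + √((m²+2m)/4) when m is even, and λ_max(H^XY(S_m)) = m + 1/2 when m is odd. -/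
open Matrix Finset

noncomputable section

/-- Computational basis states of `n` qubits. -/
abbrev QState (n : ℕ) := Fin n → Fin 2

/-- Pauli `X` matrix. -/
def pauliX : Matrix (Fin 2) (Fin 2) ℂ := !![0, 1; 1, 0]

/-- Pauli `Y` matrix. -/
def pauliY : Matrix (Fin 2) (Fin 2) ℂ := !![0, -Complex.I; Complex.I, 0]

/-- Pauli `Z` matrix. -/
def pauliZ : Matrix (Fin 2) (Fin 2) ℂ := !![1, 0; 0, -1]

/-- The operator acting as `P` on qubit `i`, `Q` on qubit `j`, and the identity on all
other qubits of an `n`-qubit system. -/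
def twoSite (n : ℕ) (i j : Fin n) (P Q : Matrix (Fin 2) (Fin 2) ℂ) :
    Matrix (QState n) (QState n) ℂ :=
  Matrix.of fun x y =>
    P (x i) (y i) * Q (x j) (y j) *
      ∏ l ∈ Finset.univ \ {i, j}, (if x l = y l then (1 : ℂ) else 0)

/-- Quantum MaxCut term on the pair `(i,j)`: `(1/2)(I - XᵢXⱼ - YᵢYⱼ - ZᵢZⱼ)`. -/
def hQMC (n : ℕ) (i j : Fin n) : Matrix (QState n) (QState n) ℂ :=
  (1 / 2 : ℂ) • ((1 : Matrix (QState n) (QState n) ℂ)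
    - twoSite n i j pauliX pauliX - twoSite n i j pauliY pauliY
    - twoSite n i j pauliZ pauliZ)

/-- XY term on the pair `(i,j)`: `(1/2)(I - XᵢXⱼ - YᵢYⱼ)`. -/
def hXY (n : ℕ) (i j : Fin n) : Matrix (QState n) (QState n) ℂ :=
  (1 / 2 : ℂ) • ((1 : Matrix (QState n) (QState n) ℂ)
    - twoSite n i j pauliX pauliX - twoSite n i j pauliY pauliY)

/-- EPR term on the pair `(i,j)`: `(1/2)(I + XᵢXⱼ - YᵢYⱼ + ZᵢZⱼ)`. -/
def hEPR (n : ℕ) (i j : Fin n) : Matrix (QState n) (QState n) ℂ :=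
  (1 / 2 : ℂ) • ((1 : Matrix (QState n) (QState n) ℂ)
    + twoSite n i j pauliX pauliX - twoSite n i j pauliY pauliY
    + twoSite n i j pauliZ pauliZ)

/-- Quantum MaxCut Hamiltonian of a weighted graph given by a symmetric weight
function `w` (each edge is counted twice in the double sum, whence the factor `1/2`). -/
def HQMC (n : ℕ) (w : Fin n → Fin n → ℝ) : Matrix (QState n) (QState n) ℂ :=
  (1 / 2 : ℂ) • ∑ i, ∑ j, (w i j : ℂ) • hQMC n i j

/-- XY Hamiltonian of a weighted graph. -/
def HXY (n : ℕ) (w : Fin n → Fin n → ℝ) : Matrix (QState n) (QState n) ℂ :=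
  (1 / 2 : ℂ) • ∑ i, ∑ j, (w i j : ℂ) • hXY n i j

/-- EPR Hamiltonian of a weighted graph. -/
def HEPR (n : ℕ) (w : Fin n → Fin n → ℝ) : Matrix (QState n) (QState n) ℂ :=
  (1 / 2 : ℂ) • ∑ i, ∑ j, (w i j : ℂ) • hEPR n i j

/-- The largest (real) eigenvalue of a Hamiltonian: the supremum of the real numbers in
its complex spectrum. -/
def maxEigH {n : ℕ} (H : Matrix (QState n) (QState n) ℂ) : ℝ :=
  sSup {r : ℝ | (r : ℂ) ∈ spectrum ℂ H}

/-- Weight function of the unweighted star graph `S_m` on `Fin (m+1)`: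
vertex `0` (the center) is adjacent to all other vertices. -/
def starW (m : ℕ) : Fin (m + 1) → Fin (m + 1) → ℝ :=
  fun i j => if i ≠ j ∧ (i = 0 ∨ j = 0) then 1 else 0
lemma mem_spectrum_iff' {ι : Type*} [Fintype ι] [DecidableEq ι] (M : Matrix ι ι ℂ) (μ : ℂ) :
    μ ∈ spectrum ℂ M ↔ ∃ v, v ≠ 0 ∧ M.mulVec v = μ • v := by
  rw [spectrum.mem_iff, Matrix.isUnit_iff_isUnit_det, isUnit_iff_ne_zero, not_ne_iff,
    ← Matrix.exists_mulVec_eq_zero_iff]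
  constructor
  · rintro ⟨v, hv, h⟩
    refine ⟨v, hv, ?_⟩
    have : (algebraMap ℂ (Matrix ι ι ℂ) μ - M).mulVec v
        = μ • v - M.mulVec v := by
      rw [Matrix.sub_mulVec]
      congr 1
      rw [Algebra.algebraMap_eq_smul_one, Matrix.smul_mulVec, Matrix.one_mulVec]
    rw [this] at h
    exact (sub_eq_zero.mp h).symm
  · rintro ⟨v, hv, h⟩
    refine ⟨v, hv, ?_⟩
    rw [Matrix.sub_mulVec, Algebra.algebraMap_eq_smul_one, Matrix.smul_mulVec,
      Matrix.one_mulVec, h, sub_self]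

lemma twoSite_comm (n : ℕ) (i j : Fin n) (P : Matrix (Fin 2) (Fin 2) ℂ) :
    twoSite n i j P P = twoSite n j i P P := by
  ext x y
  simp only [twoSite, Matrix.of_apply]
  rw [Finset.pair_comm j i, mul_comm (P (x i) (y i)) (P (x j) (y j))]

lemma hXY_comm (n : ℕ) (i j : Fin n) : hXY n i j = hXY n j i := by
  unfold hXY
  rw [twoSite_comm n i j pauliX, twoSite_comm n i j pauliY]

set_option maxRecDepth 100000 in
lemma HXY_star_eq (m : ℕ) :
    HXY (m + 1) (starW m) = ∑ j ∈ Finset.univ.erase (0 : Fin (m+1)), hXY (m+1) 0 j := by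
  have hw : ∀ i j : Fin (m+1), ((starW m i j : ℂ)) • hXY (m+1) i j
      = if i ≠ j ∧ (i = 0 ∨ j = 0) then hXY (m+1) i j else 0 := by
    intro i j
    unfold starW
    by_cases h : i ≠ j ∧ (i = 0 ∨ j = 0)
    · rw [if_pos h, if_pos h]
      norm_num
    · rw [if_neg h, if_neg h]
      norm_num
  simp only [HXY, hw]
  rw [← Finset.sum_erase_add _ _ (Finset.mem_univ (0 : Fin (m+1)))]
  have h0 : ∑ j, (if (0:Fin (m+1)) ≠ j ∧ ((0:Fin (m+1)) = 0 ∨ j = 0) then hXY (m+1) 0 j else 0)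
      = ∑ j ∈ Finset.univ.erase (0 : Fin (m+1)), hXY (m+1) 0 j := by
    have h : ∀ j : Fin (m+1), (if (0:Fin (m+1)) ≠ j ∧ ((0:Fin (m+1)) = 0 ∨ j = 0)
        then hXY (m+1) 0 j else 0)
        = if j ∈ Finset.univ.erase (0:Fin (m+1)) then hXY (m+1) 0 j else 0 := by
      intro j
      by_cases hj : j = 0 <;> simp [hj, Ne, eq_comm]
    rw [Finset.sum_congr rfl fun j _ => h j, Finset.sum_ite_mem, Finset.univ_inter]
  have hi : ∀ i ∈ Finset.univ.erase (0:Fin (m+1)),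
      ∑ j, (if i ≠ j ∧ (i = 0 ∨ j = 0) then hXY (m+1) i j else 0) = hXY (m+1) 0 i := by
    intro i hmem
    have hi0 : i ≠ 0 := (Finset.mem_erase.mp hmem).1
    have h : ∀ j : Fin (m+1), (if i ≠ j ∧ (i = 0 ∨ j = 0) then hXY (m+1) i j else 0)
        = if j = 0 then hXY (m+1) i j else 0 := by
      intro j
      by_cases hj : j = 0 <;> simp [hj, hi0]
    rw [Finset.sum_congr rfl fun j _ => h j, Finset.sum_ite_eq' Finset.univ (0:Fin (m+1))]
    simp [hXY_comm (m+1) i 0]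
  rw [Finset.sum_congr rfl hi, h0, ← two_smul ℂ, smul_smul]
  norm_num

lemma fin2_eq_zero_or_one : ∀ a : Fin 2, a = 0 ∨ a = 1 := by decide

lemma hXY_apply (m : ℕ) (j : Fin (m+1)) (x y : QState (m+1)) :
    hXY (m+1) 0 j x y = (if x = y then (1/2 : ℂ) else 0)
      - if (x 0 ≠ y 0 ∧ x j ≠ y j ∧ x 0 ≠ x j ∧ ∀ l, l ≠ 0 → l ≠ j → x l = y l)
        then 1 else 0 := by
  have hR : (∏ l ∈ Finset.univ \ ({0, j} : Finset (Fin (m+1))),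
        (if x l = y l then (1:ℂ) else 0))
      = if (∀ l, l ≠ 0 → l ≠ j → x l = y l) then 1 else 0 := by
    rw [Finset.prod_boole]
    by_cases h : ∀ l, l ≠ 0 → l ≠ j → x l = y l
    · rw [if_pos h, if_pos]
      intro l hl
      simp only [Finset.mem_sdiff, Finset.mem_univ, Finset.mem_insert,
        Finset.mem_singleton, not_or, true_and] at hl
      exact h l hl.1 hl.2
    · rw [if_neg h, if_neg]
      intro hc
      apply h
      intro l h0 hj'
      exact hc l (by simp [h0, hj'])
  have heq : (x = y) ↔ (x 0 = y 0 ∧ x j = y j ∧ ∀ l, l ≠ 0 → l ≠ j → x l = y l) := by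
    constructor
    · rintro rfl
      exact ⟨rfl, rfl, fun _ _ _ => rfl⟩
    · rintro ⟨h0, hj', hr⟩
      funext l
      by_cases hl0 : l = 0
      · rw [hl0]; exact h0
      by_cases hlj : l = j
      · rw [hlj]; exact hj'
      · exact hr l hl0 hlj
  simp only [hXY, Matrix.smul_apply, Matrix.sub_apply, Matrix.one_apply, twoSite,
    Matrix.of_apply, hR, heq, smul_eq_mul]
  by_cases hRc : ∀ l, l ≠ 0 → l ≠ j → x l = y l
  · simp only [eq_true hRc, if_true, and_true, mul_one]
    rcases fin2_eq_zero_or_one (x 0) with ha | ha <;>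
      rcases fin2_eq_zero_or_one (y 0) with hb | hb <;>
      rcases fin2_eq_zero_or_one (x j) with hc | hc <;>
      rcases fin2_eq_zero_or_one (y j) with hd | hd <;>
      simp [ha, hb, hc, hd, pauliX, pauliY] <;> ring_nf
  · simp only [eq_false hRc, if_false, and_false, mul_zero, sub_zero]

/-- Swap the values of qubit `0` and qubit `j`. -/
def flip0 (m : ℕ) (x : QState (m+1)) (j : Fin (m+1)) : QState (m+1) :=
  fun l => if l = 0 then x j else if l = j then x 0 else x l

lemma flip0_zero (m : ℕ) (x : QState (m+1)) (j : Fin (m+1)) : flip0 m x j 0 = x j := by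
  simp [flip0]

lemma flip0_j (m : ℕ) (x : QState (m+1)) {j : Fin (m+1)} (hj : j ≠ 0) :
    flip0 m x j j = x 0 := by
  simp [flip0, hj]

lemma flip0_other (m : ℕ) (x : QState (m+1)) (j : Fin (m+1)) {l : Fin (m+1)}
    (hl0 : l ≠ 0) (hlj : l ≠ j) : flip0 m x j l = x l := by
  simp [flip0, hl0, hlj]

lemma flip0_flip0 (m : ℕ) (x : QState (m+1)) {j : Fin (m+1)} (hj : j ≠ 0) :
    flip0 m (flip0 m x j) j = x := by
  funext l
  by_cases hl0 : l = 0
  · rw [hl0, flip0_zero, flip0_j m x hj]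
  by_cases hlj : l = j
  · rw [hlj, flip0_j m _ hj, flip0_zero]
  · rw [flip0_other m _ j hl0 hlj, flip0_other m x j hl0 hlj]

lemma fin2_ne_ne {a b c : Fin 2} : a ≠ b → a ≠ c → b = c := by revert a b c; decide

lemma hop_iff (m : ℕ) {j : Fin (m+1)} (hj : j ≠ 0) (x y : QState (m+1)) :
    (x 0 ≠ y 0 ∧ x j ≠ y j ∧ x 0 ≠ x j ∧ ∀ l, l ≠ 0 → l ≠ j → x l = y l)
    ↔ (x 0 ≠ x j ∧ y = flip0 m x j) := by
  constructor
  · rintro ⟨h1, h2, h3, h4⟩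
    refine ⟨h3, funext fun l => ?_⟩
    by_cases hl0 : l = 0
    · rw [hl0, flip0_zero]
      exact (fin2_ne_ne h3 h1).symm
    by_cases hlj : l = j
    · rw [hlj, flip0_j m x hj]
      exact (fin2_ne_ne h3.symm h2).symm
    · rw [flip0_other m x j hl0 hlj]
      exact (h4 l hl0 hlj).symm
  · rintro ⟨h3, rfl⟩
    exact ⟨by rw [flip0_zero]; exact h3, by rw [flip0_j m x hj]; exact h3.symm, h3,
      fun l hl0 hlj => (flip0_other m x j hl0 hlj).symm⟩

lemma HXY_star_mulVec (m : ℕ) (ψ : QState (m+1) → ℂ) (x : QState (m+1)) :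
    (HXY (m+1) (starW m)).mulVec ψ x
      = (m / 2 : ℂ) * ψ x - ∑ j ∈ Finset.univ.erase (0 : Fin (m+1)),
          (if x 0 ≠ x j then ψ (flip0 m x j) else 0) := by
  rw [HXY_star_eq]
  have hmv : (∑ j ∈ Finset.univ.erase (0 : Fin (m+1)), hXY (m+1) 0 j).mulVec ψ x
      = ∑ j ∈ Finset.univ.erase (0 : Fin (m+1)), ∑ y, hXY (m+1) 0 j x y * ψ y := by
    rw [Matrix.mulVec, dotProduct]
    rw [Finset.sum_comm]
    congr 1
    funext y
    rw [Matrix.sum_apply, Finset.sum_mul]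
  rw [hmv]
  have hterm : ∀ j ∈ Finset.univ.erase (0 : Fin (m+1)),
      (∑ y, hXY (m+1) 0 j x y * ψ y)
        = (1/2 : ℂ) * ψ x - (if x 0 ≠ x j then ψ (flip0 m x j) else 0) := by
    intro j hjmem
    have hj : j ≠ 0 := (Finset.mem_erase.mp hjmem).1
    have h1 : ∀ y, hXY (m+1) 0 j x y * ψ y
        = (if y = x then (1/2 : ℂ) * ψ y else 0)
          - (if x 0 ≠ x j ∧ y = flip0 m x j then ψ y else 0) := by
      intro y
      rw [hXY_apply m j x y, sub_mul]
      congr 1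
      · by_cases h : x = y
        · rw [if_pos h, if_pos h.symm]
        · rw [if_neg h, if_neg (fun hc => h hc.symm), zero_mul]
      · rw [if_congr (hop_iff m hj x y) rfl rfl]
        by_cases h : x 0 ≠ x j ∧ y = flip0 m x j
        · rw [if_pos h, if_pos h, one_mul]
        · rw [if_neg h, if_neg h, zero_mul]
    rw [Finset.sum_congr rfl fun y _ => h1 y, Finset.sum_sub_distrib,
      Finset.sum_ite_eq' Finset.univ x (fun y => (1/2 : ℂ) * ψ y)]
    simp only [Finset.mem_univ, if_true]
    congr 1
    by_cases hx : x 0 ≠ x j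
    · rw [if_pos hx]
      have h2 : ∀ y, (if x 0 ≠ x j ∧ y = flip0 m x j then ψ y else 0)
          = (if y = flip0 m x j then ψ y else 0) := fun y => by
        rw [if_congr (and_iff_right hx) rfl rfl]
      rw [Finset.sum_congr rfl fun y _ => h2 y,
        Finset.sum_ite_eq' Finset.univ (flip0 m x j) ψ, if_pos (Finset.mem_univ _)]
    · rw [if_neg hx]
      have h2 : ∀ y : QState (m+1), (if x 0 ≠ x j ∧ y = flip0 m x j then ψ y else 0)
          = 0 := fun y => by
        rw [if_neg (fun hc => hx hc.1)]
      rw [Finset.sum_congr rfl fun y _ => h2 y, Finset.sum_const_zero]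
  rw [Finset.sum_congr rfl hterm, Finset.sum_sub_distrib, Finset.sum_const]
  have hcard : (Finset.univ.erase (0 : Fin (m+1))).card = m := by
    rw [Finset.card_erase_of_mem (Finset.mem_univ _), Finset.card_univ, Fintype.card_fin]
    rfl
  rw [hcard, nsmul_eq_mul]
  ring

/-- Hamming weight of a basis state. -/
def wt (m : ℕ) (x : QState (m+1)) : ℕ := ∑ l, (x l).val

lemma sum_split {M : Type*} [AddCommMonoid M] (m : ℕ) {j : Fin (m+1)} (hj : j ≠ 0)
    (f : Fin (m+1) → M) :
    ∑ l, f l = f 0 + f j + ∑ l ∈ (Finset.univ.erase (0 : Fin (m+1))).erase j, f l := by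
  rw [← Finset.add_sum_erase Finset.univ f (Finset.mem_univ 0),
    ← Finset.add_sum_erase _ f (Finset.mem_erase.mpr ⟨hj, Finset.mem_univ j⟩), add_assoc]

lemma wt_flip0 (m : ℕ) (x : QState (m+1)) {j : Fin (m+1)} (hj : j ≠ 0) :
    wt m (flip0 m x j) = wt m x := by
  unfold wt
  rw [sum_split m hj, sum_split m hj (fun l => (x l).val), flip0_zero, flip0_j m x hj]
  have : ∑ l ∈ (Finset.univ.erase (0 : Fin (m+1))).erase j, (flip0 m x j l).val
      = ∑ l ∈ (Finset.univ.erase (0 : Fin (m+1))).erase j, (x l).val := by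
    refine Finset.sum_congr rfl fun l hl => ?_
    have h1 := Finset.mem_erase.mp hl
    have h2 := Finset.mem_erase.mp h1.2
    rw [flip0_other m x j h2.1 h1.1]
  rw [this]
  ring

lemma sum_val_erase (m : ℕ) (x : QState (m+1)) :
    ∑ j ∈ Finset.univ.erase (0 : Fin (m+1)), ((x j).val : ℂ)
      = (wt m x : ℂ) - ((x 0).val : ℂ) := by
  have h : wt m x = (x 0).val + ∑ j ∈ Finset.univ.erase (0 : Fin (m+1)), (x j).val :=
    (Finset.add_sum_erase Finset.univ _ (Finset.mem_univ 0)).symm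
  rw [h]
  push_cast
  ring

lemma fin2_ne_one {a : Fin 2} (h : a ≠ 1) : a = 0 := by revert a h; decide
lemma fin2_ne_zero {a : Fin 2} (h : a ≠ 0) : a = 1 := by revert a h; decide

lemma count_hop_one (m : ℕ) (x : QState (m+1)) (hx : x 0 = 1) :
    ∑ j ∈ Finset.univ.erase (0 : Fin (m+1)), (if x 0 ≠ x j then (1:ℂ) else 0)
      = (m : ℂ) + 1 - (wt m x : ℂ) := by
  have h : ∀ j : Fin (m+1), (if x 0 ≠ x j then (1:ℂ) else 0) = 1 - ((x j).val : ℂ) := by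
    intro j
    rcases fin2_eq_zero_or_one (x j) with hj | hj <;> simp [hx, hj]
  rw [Finset.sum_congr rfl fun j _ => h j, Finset.sum_sub_distrib, sum_val_erase m x,
    Finset.sum_const, Finset.card_erase_of_mem (Finset.mem_univ _), Finset.card_univ,
    Fintype.card_fin, hx]
  push_cast [Fin.val_one]
  ring

lemma count_hop_zero (m : ℕ) (x : QState (m+1)) (hx : x 0 = 0) :
    ∑ j ∈ Finset.univ.erase (0 : Fin (m+1)), (if x 0 ≠ x j then (1:ℂ) else 0)
      = (wt m x : ℂ) := by
  have h : ∀ j : Fin (m+1), (if x 0 ≠ x j then (1:ℂ) else 0) = ((x j).val : ℂ) := by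
    intro j
    rcases fin2_eq_zero_or_one (x j) with hj | hj <;> simp [hx, hj]
  rw [Finset.sum_congr rfl fun j _ => h j, sum_val_erase m x, hx]
  simp

/-- The optimal number of excitations. -/
def kst (m : ℕ) : ℕ := m / 2 + 1

/-- `k⋆ (m + 1 - k⋆)`, the square of the top adjacency eigenvalue. -/
def Kst (m : ℕ) : ℕ := kst m * (m + 1 - kst m)

/-- The claimed maximum eigenvalue. -/
def lam (m : ℕ) : ℝ := m / 2 + Real.sqrt (Kst m)

lemma kst_le (m : ℕ) (hm : 1 ≤ m) : kst m ≤ m := by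
  unfold kst; omega

lemma kst_pos (m : ℕ) : 1 ≤ kst m := by unfold kst; omega

lemma sqrt_Kst (m : ℕ) :
    Real.sqrt (Kst m) = Real.sqrt (kst m) * Real.sqrt (m + 1 - kst m : ℕ) := by
  unfold Kst
  push_cast
  rw [Real.sqrt_mul (Nat.cast_nonneg _)]

/-- The top eigenvector. -/
def eigvec (m : ℕ) : QState (m+1) → ℂ := fun x =>
  if wt m x = kst m then
    (if x 0 = 1 then ((Real.sqrt (m + 1 - kst m : ℕ) : ℝ) : ℂ)
      else -((Real.sqrt (kst m) : ℝ) : ℂ))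
  else 0

lemma cast_sub_kst (m : ℕ) : (m : ℝ) + 1 - (kst m : ℝ) = ((m + 1 - kst m : ℕ) : ℝ) := by
  have h : kst m ≤ m + 1 := by unfold kst; omega
  rw [Nat.cast_sub h]
  push_cast
  ring

lemma eigvec_eigen (m : ℕ) (hm : 1 ≤ m) :
    (HXY (m+1) (starW m)).mulVec (eigvec m) = ((lam m : ℝ) : ℂ) • eigvec m := by
  funext x
  rw [Pi.smul_apply, smul_eq_mul, HXY_star_mulVec]
  by_cases hwt : wt m x = kst m
  · rcases fin2_eq_zero_or_one (x 0) with hx0 | hx0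
    · -- center unoccupied: ψ x = -√k⋆
      have hψ : eigvec m x = -((Real.sqrt (kst m) : ℝ) : ℂ) := by
        simp [eigvec, hwt, hx0]
      have hterm : ∀ j ∈ Finset.univ.erase (0 : Fin (m+1)),
          (if x 0 ≠ x j then eigvec m (flip0 m x j) else 0)
            = ((Real.sqrt (m + 1 - kst m : ℕ) : ℝ) : ℂ)
              * (if x 0 ≠ x j then (1:ℂ) else 0) := by
        intro j hjmem
        have hj : j ≠ 0 := (Finset.mem_erase.mp hjmem).1
        by_cases hcond : x 0 ≠ x j
        · rw [if_pos hcond, if_pos hcond, mul_one]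
          have h1 : flip0 m x j 0 = 1 := by
            rw [flip0_zero]
            exact fin2_ne_zero (fun hc => hcond (hx0.trans hc.symm))
          simp [eigvec, wt_flip0 m x hj, hwt, h1]
        · rw [if_neg hcond, if_neg hcond, mul_zero]
      rw [Finset.sum_congr rfl hterm, ← Finset.mul_sum, count_hop_zero m x hx0, hwt, hψ]
      have hk : Real.sqrt (kst m) * Real.sqrt (kst m) = (kst m : ℝ) :=
        Real.mul_self_sqrt (Nat.cast_nonneg _)
      have hkC : ((Real.sqrt (kst m) : ℝ) : ℂ) * ((Real.sqrt (kst m) : ℝ) : ℂ)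
          = ((kst m : ℕ) : ℂ) := by exact_mod_cast hk
      have hlamC : ((lam m : ℝ) : ℂ) = (m : ℂ)/2
          + ((Real.sqrt (kst m) : ℝ) : ℂ) * ((Real.sqrt ((m+1-kst m : ℕ)) : ℝ) : ℂ) := by
        unfold lam
        rw [sqrt_Kst]
        push_cast
        ring
      rw [hlamC]
      linear_combination ((Real.sqrt ((m+1-kst m : ℕ)) : ℝ) : ℂ) * hkC
    · -- center occupied: ψ x = √(m+1-k⋆)
      have hψ : eigvec m x = ((Real.sqrt (m + 1 - kst m : ℕ) : ℝ) : ℂ) := by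
        simp [eigvec, hwt, hx0]
      have hterm : ∀ j ∈ Finset.univ.erase (0 : Fin (m+1)),
          (if x 0 ≠ x j then eigvec m (flip0 m x j) else 0)
            = (-((Real.sqrt (kst m) : ℝ) : ℂ)) * (if x 0 ≠ x j then (1:ℂ) else 0) := by
        intro j hjmem
        have hj : j ≠ 0 := (Finset.mem_erase.mp hjmem).1
        by_cases hcond : x 0 ≠ x j
        · rw [if_pos hcond, if_pos hcond, mul_one]
          have h1 : flip0 m x j 0 ≠ 1 := by
            rw [flip0_zero]
            intro hc
            exact hcond (hx0.trans hc.symm)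
          simp [eigvec, wt_flip0 m x hj, hwt, h1]
        · rw [if_neg hcond, if_neg hcond, mul_zero]
      rw [Finset.sum_congr rfl hterm, ← Finset.mul_sum, count_hop_one m x hx0, hwt, hψ]
      have hq : Real.sqrt ((m+1-kst m : ℕ)) * Real.sqrt ((m+1-kst m : ℕ))
          = ((m+1-kst m : ℕ) : ℝ) := Real.mul_self_sqrt (Nat.cast_nonneg _)
      have hqC : ((Real.sqrt ((m+1-kst m : ℕ)) : ℝ) : ℂ) * ((Real.sqrt ((m+1-kst m : ℕ)) : ℝ) : ℂ)
          = ((m+1-kst m : ℕ) : ℂ) := by exact_mod_cast hq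
      have hsubC : ((m+1-kst m : ℕ) : ℂ) = (m : ℂ) + 1 - (kst m : ℂ) := by
        have h : kst m ≤ m + 1 := by unfold kst; omega
        push_cast [Nat.cast_sub h]
        ring
      have hlamC : ((lam m : ℝ) : ℂ) = (m : ℂ)/2
          + ((Real.sqrt (kst m) : ℝ) : ℂ) * ((Real.sqrt ((m+1-kst m : ℕ)) : ℝ) : ℂ) := by
        unfold lam
        rw [sqrt_Kst]
        push_cast
        ring
      rw [hlamC, ← hsubC]
      linear_combination (-((Real.sqrt (kst m) : ℝ) : ℂ)) * hqC
  · have hψ : eigvec m x = 0 := by simp [eigvec, hwt]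
    have hterm : ∀ j ∈ Finset.univ.erase (0 : Fin (m+1)),
        (if x 0 ≠ x j then eigvec m (flip0 m x j) else 0) = 0 := by
      intro j hjmem
      have hj : j ≠ 0 := (Finset.mem_erase.mp hjmem).1
      by_cases hcond : x 0 ≠ x j
      · rw [if_pos hcond]
        simp [eigvec, wt_flip0 m x hj, hwt]
      · rw [if_neg hcond]
    rw [Finset.sum_congr rfl hterm, Finset.sum_const_zero, hψ]
    ring

lemma eigvec_ne_zero (m : ℕ) (hm : 1 ≤ m) : eigvec m ≠ 0 := by
  have hk1 : 1 ≤ kst m := kst_pos m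
  have hkm : kst m ≤ m := kst_le m hm
  set a : Fin (m+1) := ⟨kst m, by omega⟩ with ha
  set x : QState (m+1) := fun l => if l < a then 1 else 0 with hxdef
  have hx0 : x 0 = 1 := by
    have : (0 : Fin (m+1)) < a := by
      rw [Fin.lt_def]
      exact lt_of_lt_of_le Nat.zero_lt_one hk1
    simp [hxdef, this]
  have hwt : wt m x = kst m := by
    unfold wt
    have h1 : ∀ l : Fin (m+1), (x l).val = if l < a then 1 else 0 := by
      intro l
      by_cases hl : l < a <;> simp [hxdef, hl]
    rw [Finset.sum_congr rfl fun l _ => h1 l, Finset.sum_boole]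
    have : Finset.univ.filter (fun l : Fin (m+1) => l < a) = Finset.Iio a := by
      ext l
      simp [Finset.mem_Iio]
    rw [this, Fin.card_Iio]
    simp [ha]
  intro hc
  have : eigvec m x = 0 := by rw [hc]; rfl
  rw [eigvec, if_pos hwt, if_pos hx0] at this
  have h2 : Real.sqrt ((m + 1 - kst m : ℕ)) = 0 := by exact_mod_cast this
  have h3 : (0:ℝ) < ((m + 1 - kst m : ℕ) : ℝ) := by
    have : 1 ≤ m + 1 - kst m := by omega
    exact_mod_cast Nat.lt_of_lt_of_le Nat.zero_lt_one this
  exact absurd h2 (ne_of_gt (Real.sqrt_pos.mpr h3))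

lemma lam_mem_spectrum (m : ℕ) (hm : 1 ≤ m) :
    ((lam m : ℝ) : ℂ) ∈ spectrum ℂ (HXY (m+1) (starW m)) :=
  (mem_spectrum_iff' _ _).mpr ⟨eigvec m, eigvec_ne_zero m hm, eigvec_eigen m hm⟩

lemma sum_val_erase_real (m : ℕ) (x : QState (m+1)) :
    ∑ j ∈ Finset.univ.erase (0 : Fin (m+1)), ((x j).val : ℝ)
      = (wt m x : ℝ) - ((x 0).val : ℝ) := by
  have h : wt m x = (x 0).val + ∑ j ∈ Finset.univ.erase (0 : Fin (m+1)), (x j).val :=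
    (Finset.add_sum_erase Finset.univ _ (Finset.mem_univ 0)).symm
  rw [h]
  push_cast
  ring

lemma count_hop_one_real (m : ℕ) (x : QState (m+1)) (hx : x 0 = 1) :
    ∑ j ∈ Finset.univ.erase (0 : Fin (m+1)), (if x 0 ≠ x j then (1:ℝ) else 0)
      = (m : ℝ) + 1 - (wt m x : ℝ) := by
  have h : ∀ j : Fin (m+1), (if x 0 ≠ x j then (1:ℝ) else 0) = 1 - ((x j).val : ℝ) := by
    intro j
    rcases fin2_eq_zero_or_one (x j) with hj | hj <;> simp [hx, hj]
  rw [Finset.sum_congr rfl fun j _ => h j, Finset.sum_sub_distrib, sum_val_erase_real m x,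
    Finset.sum_const, Finset.card_erase_of_mem (Finset.mem_univ _), Finset.card_univ,
    Fintype.card_fin, hx]
  push_cast [Fin.val_one]
  ring

lemma count_hop_zero_real (m : ℕ) (x : QState (m+1)) (hx : x 0 = 0) :
    ∑ j ∈ Finset.univ.erase (0 : Fin (m+1)), (if x 0 ≠ x j then (1:ℝ) else 0)
      = (wt m x : ℝ) := by
  have h : ∀ j : Fin (m+1), (if x 0 ≠ x j then (1:ℝ) else 0) = ((x j).val : ℝ) := by
    intro j
    rcases fin2_eq_zero_or_one (x j) with hj | hj <;> simp [hx, hj]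
  rw [Finset.sum_congr rfl fun j _ => h j, sum_val_erase_real m x, hx]
  simp

lemma wt_le (m : ℕ) (x : QState (m+1)) : wt m x ≤ m + 1 := by
  unfold wt
  calc ∑ l, (x l).val ≤ ∑ _l : Fin (m+1), 1 := by
        refine Finset.sum_le_sum fun l _ => ?_
        have := (x l).isLt
        omega
    _ = m + 1 := by simp

lemma wt_pos_of_one (m : ℕ) {x : QState (m+1)} {j : Fin (m+1)} (hj : x j = 1) :
    1 ≤ wt m x := by
  unfold wt
  calc 1 = (x j).val := by rw [hj]; rfl
    _ ≤ ∑ l, (x l).val :=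
      Finset.single_le_sum (f := fun l => (x l).val) (fun l _ => Nat.zero_le _)
        (Finset.mem_univ j)

lemma wt_le_of_zero (m : ℕ) {x : QState (m+1)} {j : Fin (m+1)} (hj : x j = 0) :
    wt m x ≤ m := by
  have h : wt m x = (x j).val + ∑ l ∈ Finset.univ.erase j, (x l).val :=
    (Finset.add_sum_erase Finset.univ _ (Finset.mem_univ j)).symm
  have h2 : ∑ l ∈ Finset.univ.erase j, (x l).val
      ≤ ∑ _l ∈ Finset.univ.erase j, 1 := by
    refine Finset.sum_le_sum fun l _ => ?_
    have := (x l).isLt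
    omega
  have h3 : (Finset.univ.erase j).card = m := by
    rw [Finset.card_erase_of_mem (Finset.mem_univ _), Finset.card_univ, Fintype.card_fin]
    omega
  rw [hj] at h
  simp only [Finset.sum_const, smul_eq_mul, mul_one, h3] at h2
  omega

lemma prod_le_Kst (m k : ℕ) (hk : k ≤ m + 1) : k * (m + 1 - k) ≤ Kst m := by
  unfold Kst kst
  obtain ⟨d, r, hr, rfl⟩ : ∃ d r, r ≤ 1 ∧ m = 2*d + r := ⟨m/2, m%2, by omega, by omega⟩
  have hd2 : (2*d + r)/2 = d := by omega
  rw [hd2]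
  zify [hk, show d + 1 ≤ 2*d + r + 1 by omega]
  have hr0 : (0:ℤ) ≤ (r:ℤ) := Int.natCast_nonneg _
  have hr1 : ((r:ℕ):ℤ) ≤ 1 := by exact_mod_cast hr
  rcases le_or_gt (k:ℤ) (d:ℤ) with h | h
  · have h1 : (0:ℤ) ≤ ((d:ℤ) - k) * ((d:ℤ) + r + 1 - k) :=
      mul_nonneg (by linarith) (by linarith)
    push_cast
    nlinarith [h1, hr0]
  · have h1 : (0:ℤ) ≤ ((k:ℤ) - d - 1) * ((k:ℤ) - d - r) :=
      mul_nonneg (by linarith) (by linarith)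
    push_cast
    nlinarith [h1, hr0]

lemma amgm (a b s u : ℝ) (ha : 0 ≤ a) (hb : 0 ≤ b) (hs : 0 ≤ s) (hsu : s * u = 1) :
    a * b ≤ (s * a^2 + u * b^2) / 2 := by
  have hs' : 0 < s := by
    rcases hs.eq_or_lt with h | h
    · exfalso; rw [← h, zero_mul] at hsu; exact zero_ne_one hsu
    · exact h
  have hu : (0:ℝ) < u := by
    by_contra hc
    push_neg at hc
    have : s * u ≤ 0 := mul_nonpos_of_nonneg_of_nonpos hs hc
    linarith [hsu.symm.le.trans this]
  nlinarith [mul_nonneg hu.le (sq_nonneg (s*a - b)), hsu]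

/-- The per-site weight used in the AM-GM bound. -/
def tfun (m : ℕ) (x : QState (m+1)) : ℝ :=
  if x 0 = 1 then Real.sqrt ((wt m x : ℝ) / ((m:ℝ) + 1 - wt m x))
  else Real.sqrt (((m:ℝ) + 1 - wt m x) / (wt m x))

lemma tfun_nonneg (m : ℕ) (x : QState (m+1)) : 0 ≤ tfun m x := by
  unfold tfun
  split <;> exact Real.sqrt_nonneg _

lemma tfun_mul_flip (m : ℕ) {x : QState (m+1)} {j : Fin (m+1)} (hj : j ≠ 0)
    (hc : x 0 ≠ x j) : tfun m x * tfun m (flip0 m x j) = 1 := by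
  have hwtf : wt m (flip0 m x j) = wt m x := wt_flip0 m x hj
  have hf0 : flip0 m x j 0 = x j := flip0_zero m x j
  rcases fin2_eq_zero_or_one (x 0) with hx0 | hx0
  · have hxj : x j = 1 := fin2_ne_zero (fun hcc => hc (hx0.trans hcc.symm))
    have hk1 : 1 ≤ wt m x := wt_pos_of_one m hxj
    have hkm : wt m x ≤ m := wt_le_of_zero m hx0
    have hkpos : (0:ℝ) < (wt m x : ℝ) := by exact_mod_cast hk1
    have hqpos : (0:ℝ) < (m:ℝ) + 1 - (wt m x : ℝ) := by
      have : (wt m x : ℝ) ≤ (m : ℝ) := by exact_mod_cast hkm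
      linarith
    have ht1 : tfun m x = Real.sqrt (((m:ℝ) + 1 - wt m x) / (wt m x)) := by
      unfold tfun
      rw [if_neg (by rw [hx0]; decide)]
    have ht2 : tfun m (flip0 m x j)
        = Real.sqrt ((wt m x : ℝ) / ((m:ℝ) + 1 - wt m x)) := by
      unfold tfun
      rw [if_pos (by rw [hf0, hxj]), hwtf]
    rw [ht1, ht2, ← Real.sqrt_mul (by positivity)]
    rw [show ((m:ℝ) + 1 - wt m x) / (wt m x) * ((wt m x : ℝ) / ((m:ℝ) + 1 - wt m x)) = 1
      from by field_simp]
    exact Real.sqrt_one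
  · have hxj : x j = 0 := fin2_ne_one (fun hcc => hc (hx0.trans hcc.symm))
    have hk1 : 1 ≤ wt m x := wt_pos_of_one m hx0
    have hkm : wt m x ≤ m := wt_le_of_zero m hxj
    have hkpos : (0:ℝ) < (wt m x : ℝ) := by exact_mod_cast hk1
    have hqpos : (0:ℝ) < (m:ℝ) + 1 - (wt m x : ℝ) := by
      have : (wt m x : ℝ) ≤ (m : ℝ) := by exact_mod_cast hkm
      linarith
    have ht1 : tfun m x = Real.sqrt ((wt m x : ℝ) / ((m:ℝ) + 1 - wt m x)) := by
      unfold tfun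
      rw [if_pos hx0]
    have ht2 : tfun m (flip0 m x j)
        = Real.sqrt (((m:ℝ) + 1 - wt m x) / (wt m x)) := by
      unfold tfun
      rw [if_neg (by rw [hf0, hxj]; decide), hwtf]
    rw [ht1, ht2, ← Real.sqrt_mul (by positivity)]
    rw [show (wt m x : ℝ) / ((m:ℝ) + 1 - wt m x) * (((m:ℝ) + 1 - wt m x) / (wt m x)) = 1
      from by field_simp]
    exact Real.sqrt_one

lemma cast_prod_le_Kst (m k : ℕ) (hk : k ≤ m + 1) :
    (k : ℝ) * ((m:ℝ) + 1 - (k:ℝ)) ≤ (Kst m : ℝ) := by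
  have h1 : (k:ℝ) * ((m:ℝ) + 1 - (k:ℝ)) = ((k * (m + 1 - k) : ℕ) : ℝ) := by
    push_cast [Nat.cast_sub hk]
    ring
  rw [h1]
  exact_mod_cast prod_le_Kst m k hk

lemma dt_le (m : ℕ) (x : QState (m+1)) :
    (∑ j ∈ Finset.univ.erase (0 : Fin (m+1)), if x 0 ≠ x j then (1:ℝ) else 0) * tfun m x
      ≤ Real.sqrt (Kst m) := by
  have hkle : wt m x ≤ m + 1 := wt_le m x
  set k := wt m x with hkdef
  rcases fin2_eq_zero_or_one (x 0) with hx0 | hx0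
  · rw [count_hop_zero_real m x hx0]
    have ht : tfun m x = Real.sqrt (((m:ℝ) + 1 - k) / k) := by
      unfold tfun
      rw [if_neg (by rw [hx0]; decide)]
    rw [ht]
    rcases Nat.eq_zero_or_pos k with hk0 | hk1
    · rw [hk0]
      simp [Real.sqrt_nonneg]
    · have hkpos : (0:ℝ) < (k:ℝ) := by exact_mod_cast hk1
      have hkleR : (k:ℝ) ≤ (m:ℝ) + 1 := by exact_mod_cast hkle
      apply Real.le_sqrt_of_sq_le
      have hsq : ((k:ℝ) * Real.sqrt (((m:ℝ)+1-k)/k))^2 = (k:ℝ)*((m:ℝ)+1-(k:ℝ)) := by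
        rw [mul_pow, Real.sq_sqrt (div_nonneg (by linarith) hkpos.le)]
        field_simp
      rw [hsq]
      exact cast_prod_le_Kst m k hkle
  · rw [count_hop_one_real m x hx0]
    have ht : tfun m x = Real.sqrt ((k:ℝ) / ((m:ℝ) + 1 - k)) := by
      unfold tfun
      rw [if_pos hx0]
    rw [ht]
    rcases Nat.eq_or_lt_of_le hkle with hkeq | hklt
    · rw [show (m:ℝ) + 1 - (k:ℝ) = 0 from by rw [hkeq]; push_cast; ring]
      simp [Real.sqrt_nonneg]
    · have hkm : k ≤ m := by omega
      have hqpos : (0:ℝ) < (m:ℝ) + 1 - (k:ℝ) := by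
        have : (k:ℝ) ≤ (m:ℝ) := by exact_mod_cast hkm
        linarith
      apply Real.le_sqrt_of_sq_le
      have hsq : (((m:ℝ) + 1 - k) * Real.sqrt ((k:ℝ)/((m:ℝ)+1-k)))^2
          = (k:ℝ)*((m:ℝ)+1-(k:ℝ)) := by
        rw [mul_pow, Real.sq_sqrt (div_nonneg (Nat.cast_nonneg _) hqpos.le)]
        field_simp
      rw [hsq]
      exact cast_prod_le_Kst m k hkle

lemma spectrum_le_lam (m : ℕ) (hm : 1 ≤ m) (r : ℝ)
    (hr : (r:ℂ) ∈ spectrum ℂ (HXY (m+1) (starW m))) : r ≤ lam m := by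
  obtain ⟨v, hv0, hv⟩ := (mem_spectrum_iff' _ _).mp hr
  set N : ℝ := ∑ x, Complex.normSq (v x) with hNdef
  have hN0 : 0 < N := by
    obtain ⟨x0, hx0⟩ := Function.ne_iff.mp hv0
    exact Finset.sum_pos' (fun x _ => Complex.normSq_nonneg _)
      ⟨x0, Finset.mem_univ _, Complex.normSq_pos.mpr hx0⟩
  have hNC : (N:ℂ) = ∑ x, (starRingEnd ℂ) (v x) * v x := by
    rw [hNdef]
    push_cast
    refine Finset.sum_congr rfl fun x _ => ?_
    rw [mul_comm, Complex.mul_conj]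
  set T : ℂ := ∑ x, ∑ j ∈ Finset.univ.erase (0 : Fin (m+1)),
      (if x 0 ≠ x j then (starRingEnd ℂ) (v x) * v (flip0 m x j) else 0) with hTdef
  have h1 : ∑ x, (starRingEnd ℂ) (v x) * (HXY (m+1) (starW m)).mulVec v x
      = (r:ℂ) * (N:ℂ) := by
    rw [hv, hNC, Finset.mul_sum]
    refine Finset.sum_congr rfl fun x _ => ?_
    rw [Pi.smul_apply, smul_eq_mul]
    ring
  have h2 : ∑ x, (starRingEnd ℂ) (v x) * (HXY (m+1) (starW m)).mulVec v x
      = ((m:ℂ)/2) * (N:ℂ) - T := by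
    rw [hNC, hTdef, Finset.mul_sum, ← Finset.sum_sub_distrib]
    refine Finset.sum_congr rfl fun x _ => ?_
    rw [HXY_star_mulVec, mul_sub, Finset.mul_sum]
    congr 1
    · ring
    · refine Finset.sum_congr rfl fun j _ => ?_
      by_cases hc : x 0 ≠ x j
      · rw [if_pos hc, if_pos hc]
      · rw [if_neg hc, if_neg hc, mul_zero]
  have hTval : T = ((m:ℂ)/2 - (r:ℂ)) * (N:ℂ) := by
    have := h1.symm.trans h2
    linear_combination this
  have habs : ‖T‖ ≤ Real.sqrt (Kst m) * N := by
    set G : QState (m+1) → ℝ := fun z => tfun m z * Complex.normSq (v z) with hGdef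
    set S1 : ℝ := ∑ x, ∑ j ∈ Finset.univ.erase (0 : Fin (m+1)),
        (if x 0 ≠ x j then G x else 0) with hS1def
    set S2 : ℝ := ∑ x, ∑ j ∈ Finset.univ.erase (0 : Fin (m+1)),
        (if x 0 ≠ x j then G (flip0 m x j) else 0) with hS2def
    have step1 : ‖T‖ ≤ ∑ x, ∑ j ∈ Finset.univ.erase (0 : Fin (m+1)),
        (if x 0 ≠ x j then ‖v x‖ * ‖v (flip0 m x j)‖ else 0) := by
      refine (norm_sum_le _ _).trans (Finset.sum_le_sum fun x _ => ?_)
      refine (norm_sum_le _ _).trans (Finset.sum_le_sum fun j _ => ?_)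
      by_cases hc : x 0 ≠ x j
      · rw [if_pos hc, if_pos hc, norm_mul, Complex.norm_conj]
      · rw [if_neg hc, if_neg hc, norm_zero]
    have step2 : ∑ x, ∑ j ∈ Finset.univ.erase (0 : Fin (m+1)),
        (if x 0 ≠ x j then ‖v x‖ * ‖v (flip0 m x j)‖ else 0)
        ≤ (S1 + S2)/2 := by
      rw [hS1def, hS2def, ← Finset.sum_add_distrib, Finset.sum_div]
      refine Finset.sum_le_sum fun x _ => ?_
      rw [← Finset.sum_add_distrib, Finset.sum_div]
      refine Finset.sum_le_sum fun j hjmem => ?_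
      have hj : j ≠ 0 := (Finset.mem_erase.mp hjmem).1
      by_cases hc : x 0 ≠ x j
      · rw [if_pos hc, if_pos hc, if_pos hc, hGdef]
        simp only
        rw [← Complex.sq_norm (v x), ← Complex.sq_norm (v (flip0 m x j))]
        exact amgm _ _ _ _ (norm_nonneg _) (norm_nonneg _)
          (tfun_nonneg m x) (tfun_mul_flip m hj hc)
      · rw [if_neg hc, if_neg hc, if_neg hc]
        norm_num
    have hS21 : S2 = S1 := by
      rw [hS1def, hS2def, Finset.sum_comm, Finset.sum_comm (s := Finset.univ)]
      refine Finset.sum_congr rfl fun j hjmem => ?_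
      have hj : j ≠ 0 := (Finset.mem_erase.mp hjmem).1
      have hbij : Function.Bijective (fun x : QState (m+1) => flip0 m x j) :=
        Function.Involutive.bijective (fun x => flip0_flip0 m x hj)
      refine Fintype.sum_bijective _ hbij _ _ fun x => ?_
      rw [flip0_zero, flip0_j m x hj]
      exact if_congr ne_comm rfl rfl
    have hS1le : S1 ≤ Real.sqrt (Kst m) * N := by
      rw [hS1def, hNdef, Finset.mul_sum]
      refine Finset.sum_le_sum fun x _ => ?_
      have hinner : ∑ j ∈ Finset.univ.erase (0 : Fin (m+1)),
          (if x 0 ≠ x j then G x else 0)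
          = (∑ j ∈ Finset.univ.erase (0 : Fin (m+1)),
              if x 0 ≠ x j then (1:ℝ) else 0) * G x := by
        rw [Finset.sum_mul]
        refine Finset.sum_congr rfl fun j _ => ?_
        by_cases hc : x 0 ≠ x j
        · rw [if_pos hc, if_pos hc, one_mul]
        · rw [if_neg hc, if_neg hc, zero_mul]
      rw [hinner, hGdef]
      simp only
      rw [← mul_assoc]
      exact mul_le_mul_of_nonneg_right (dt_le m x) (Complex.normSq_nonneg _)
    calc ‖T‖ ≤ (S1 + S2)/2 := step1.trans step2
      _ = S1 := by rw [hS21]; ring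
      _ ≤ Real.sqrt (Kst m) * N := hS1le
  have habs2 : ‖T‖ = |(m:ℝ)/2 - r| * N := by
    rw [hTval, norm_mul]
    have hc1 : ((m:ℂ)/2 - (r:ℂ)) = (((m:ℝ)/2 - r : ℝ) : ℂ) := by push_cast; ring
    rw [hc1, Complex.norm_real, Real.norm_eq_abs]
    congr 1
    rw [show ((N:ℝ):ℂ) = Complex.ofReal N from rfl, Complex.norm_real, Real.norm_eq_abs, abs_of_pos hN0]
  rw [habs2] at habs
  have hle : |(m:ℝ)/2 - r| ≤ Real.sqrt (Kst m) :=
    le_of_mul_le_mul_right (by linarith) hN0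
  have := neg_abs_le ((m:ℝ)/2 - r)
  unfold lam
  linarith

/-- Maximum eigenvalue of the XY Hamiltonian on the star `S_m`:
`m/2 + √((m² + 2m)/4)` for even `m`, and `m + 1/2` for odd `m`. -/
theorem star_XY_maxEig (m : ℕ) (hm : 1 ≤ m) :
    maxEigH (HXY (m + 1) (starW m))
      = if Even m then (m : ℝ) / 2 + Real.sqrt (((m : ℝ) ^ 2 + 2 * (m : ℝ)) / 4)
        else (m : ℝ) + 1 / 2 := by
  have hgreat : IsGreatest {r : ℝ | (r:ℂ) ∈ spectrum ℂ (HXY (m+1) (starW m))} (lam m) :=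
    ⟨lam_mem_spectrum m hm, fun r hr => spectrum_le_lam m hm r hr⟩
  rw [maxEigH, hgreat.csSup_eq]
  by_cases he : Even m
  · rw [if_pos he]
    obtain ⟨t, rfl⟩ := he
    have hkst : kst (t + t) = t + 1 := by unfold kst; omega
    have hKst : Kst (t + t) = (t + 1) * t := by
      unfold Kst
      rw [hkst]
      congr 1
      omega
    unfold lam
    rw [hKst]
    have harg : (((t+1)*t : ℕ) : ℝ) = (((t+t:ℕ) : ℝ)^2 + 2*((t+t:ℕ):ℝ))/4 := by
      push_cast
      ring
    rw [harg]
  · rw [if_neg he]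
    obtain ⟨t, rfl⟩ : ∃ t, m = 2*t + 1 := by
      rcases Nat.even_or_odd m with h | h
      · exact absurd h he
      · exact h
    have hkst : kst (2*t + 1) = t + 1 := by unfold kst; omega
    have hKst : Kst (2*t + 1) = (t + 1) * (t + 1) := by
      unfold Kst
      rw [hkst]
      congr 1
      omega
    unfold lam
    rw [hKst]
    have harg : ((((t+1)*(t+1)) : ℕ) : ℝ) = ((t:ℝ) + 1)^2 := by push_cast; ring
    rw [harg, Real.sqrt_sq (by positivity)]
    push_cast
    ring
end
end

section
/- For any n ≥ 2 and 1 ≤ k ≤ n/2, the eigenvalues of the adjacency matrix of the k-th token graph of the complete graph K_n (the Johnson graph J(n,k)) are exactly {(k-i)(n-k-i) - i : 0 ≤ i ≤ k}. -/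
/-!
Let `W` be the inclusion matrix of `k`-subsets in `(k+1)`-subsets of `[n]`. Counting common
subsets and common supersets gives `W Wᵀ = A(J(n,k+1)) + (k+1) I` and
`Wᵀ W = A(J(n,k)) + (n-k) I`. The characteristic polynomial of `W Wᵀ` is that of `Wᵀ W` times
`X ^ (C(n,k+1) - C(n,k))`, a positive power when `2k + 1 < n`. Hence the spectrum of `J(n,k+1)`
consists of `-(k+1)` and the spectrum of `J(n,k)` shifted by `n - 2k - 1`, and induction from
the one-vertex graph `J(n,0)` yields the eigenvalues `(k-i)(n-k-i) - i`, `0 ≤ i ≤ k`.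
-/

open Matrix Finset

noncomputable section

/-- Weight function of the unweighted complete graph `K_n`. -/
def completeW (n : ℕ) : Fin n → Fin n → ℝ := fun i j => if i ≠ j then 1 else 0

theorem Matrix.spectrum_mul_comm_of_card_lt {K m l : Type*} [Field K] [Fintype m]
    [DecidableEq m] [Fintype l] [DecidableEq l] (A : Matrix m l K) (B : Matrix l m K)
    (h : Fintype.card l < Fintype.card m) :
    spectrum K (A * B) = insert 0 (spectrum K (B * A)) := by
  ext μ
  simp only [Set.mem_insert_iff, mem_spectrum_iff_isRoot_charpoly,
    charpoly_mul_comm_of_le A B h.le, Polynomial.IsRoot, Polynomial.eval_mul, Polynomial.eval_pow,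
    Polynomial.eval_X, mul_eq_zero, pow_eq_zero_iff (Nat.sub_ne_zero_of_lt h)]

theorem Matrix.mem_spectrum_add_smul_one_iff {K m : Type*} [CommRing K] [Fintype m]
    [DecidableEq m] (M : Matrix m m K) (c μ : K) :
    μ ∈ spectrum K (M + c • 1) ↔ μ - c ∈ spectrum K M := by
  conv_lhs => rw [← sub_add_cancel μ c]
  rw [add_comm M, ← Algebra.algebraMap_eq_smul_one, spectrum.add_mem_add_iff]

theorem Nat.choose_lt_choose_succ {n k : ℕ} (h : 2 * k + 1 < n) :
    n.choose k < n.choose (k + 1) := by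
  have hmul : n.choose k * (k + 1) < n.choose k * (n - k) :=
    Nat.mul_lt_mul_of_pos_left (by omega) (Nat.choose_pos (by omega))
  rw [← Nat.choose_succ_right_eq] at hmul
  exact Nat.lt_of_mul_lt_mul_right hmul

theorem Finset.sum_ite_eq_singleton {α M : Type*} [DecidableEq α] [AddCommMonoid M]
    (s : Finset α) (c : M) :
    ∑ a ∈ s, (if s = {a} then c else 0) = if #s = 1 then c else 0 := by
  split_ifs with h
  · obtain ⟨a, rfl⟩ := card_eq_one.mp h
    simp
  · exact sum_eq_zero fun a _ => if_neg fun hs : s = {a} => h (hs ▸ card_singleton a)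

theorem Finset.sdiff_singleton_eq_sdiff_singleton_iff {α : Type*} [DecidableEq α]
    {A B : Finset α} {a b : α} (ha : a ∈ A \ B) (hb : b ∈ B \ A) :
    A \ {a} = B \ {b} ↔ A \ B = {a} ∧ B \ A = {b} := by
  simp only [Finset.ext_iff, mem_sdiff, mem_singleton] at *
  grind

theorem Finset.card_sdiff_pos_of_card_eq {α : Type*} [DecidableEq α] {A B : Finset α}
    (h : #A = #B) (hne : A ≠ B) : 0 < #(A \ B) :=
  card_pos.mpr (sdiff_nonempty.mpr fun hAB => hne (eq_of_subset_of_card_le hAB h.ge))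

theorem tokenW_completeW {n : ℕ} (A B : Finset (Fin n)) :
    tokenW (completeW n) A B
      = (if #(A \ B) = 1 then 1 else 0) * (if #(B \ A) = 1 then 1 else 0) := by
  rw [← sum_ite_eq_singleton, ← sum_ite_eq_singleton, sum_mul_sum, tokenW]
  refine sum_congr rfl fun a ha => sum_congr rfl fun b hb => ?_
  have hab : a ≠ b := fun h => (mem_sdiff.mp hb).2 (h ▸ (mem_sdiff.mp ha).1)
  rw [ite_zero_mul_ite_zero, one_mul, completeW, if_pos hab]
  exact if_congr (sdiff_singleton_eq_sdiff_singleton_iff ha hb) rfl rfl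

theorem tokenW_completeW_of_card_eq {n : ℕ} {A B : Finset (Fin n)} (h : #A = #B) :
    tokenW (completeW n) A B = if #(A \ B) = 1 then 1 else 0 := by
  rw [tokenW_completeW, ← card_sdiff_comm h]
  simp only [ite_zero_mul_ite_zero, and_self, one_mul]

def inclusionMatrix (n k : ℕ) : Matrix (TokenVert n (k + 1)) (TokenVert n k) ℝ :=
  Matrix.of fun A S => if S.1 ⊆ A.1 then 1 else 0

theorem sum_tokenVert {M : Type*} [AddCommMonoid M] (n k : ℕ) (f : Finset (Fin n) → M) :
    ∑ S : TokenVert n k, f S.1 = ∑ s ∈ powersetCard k univ, f s :=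
  (sum_subtype _ (fun _ => mem_powersetCard_univ) f).symm

theorem inclusionMatrix_mul_transpose (n k : ℕ) :
    inclusionMatrix n k * (inclusionMatrix n k)ᵀ
      = tokenA (completeW n) (k + 1) + ((k : ℝ) + 1) • 1 := by
  ext A B
  have hcount :
      (inclusionMatrix n k * (inclusionMatrix n k)ᵀ) A B = (#(A.1 ∩ B.1)).choose k := by
    simp only [mul_apply, transpose_apply, inclusionMatrix, of_apply, ite_zero_mul_ite_zero,
      one_mul]
    rw [sum_tokenVert n k (fun s => if s ⊆ A.1 ∧ s ⊆ B.1 then (1 : ℝ) else 0), sum_boole,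
      ← card_powersetCard]
    congr 2
    ext s
    simp only [mem_filter, mem_powersetCard, subset_inter_iff, subset_univ, true_and]
    tauto
  rw [hcount, Matrix.add_apply, Matrix.smul_apply, tokenA, of_apply,
    tokenW_completeW_of_card_eq (A.2.trans B.2.symm)]
  have hsplit : #(A.1 \ B.1) + #(A.1 ∩ B.1) = k + 1 := by rw [card_sdiff_add_card_inter, A.2]
  rcases eq_or_ne A B with rfl | hne
  · simp [A.2, Nat.choose_succ_self_right]
  have hdiff := card_sdiff_pos_of_card_eq (A.2.trans B.2.symm) (Subtype.coe_injective.ne hne)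
  rcases eq_or_ne #(A.1 ∩ B.1) k with heq | hne'
  · simp [hne, heq]
    omega
  · rw [Nat.choose_eq_zero_of_lt (by omega), if_neg (by omega), one_apply_ne hne]
    simp

theorem transpose_mul_inclusionMatrix (n k : ℕ) :
    (inclusionMatrix n k)ᵀ * inclusionMatrix n k
      = tokenA (completeW n) k + ((n : ℝ) - k) • 1 := by
  ext S T
  have hcount : ((inclusionMatrix n k)ᵀ * inclusionMatrix n k) S T
      = #{A ∈ powersetCard (k + 1) univ | S.1 ∪ T.1 ⊆ A} := by
    simp only [mul_apply, transpose_apply, inclusionMatrix, of_apply, ite_zero_mul_ite_zero,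
      one_mul, ← union_subset_iff]
    rw [sum_tokenVert n (k + 1) (fun s => if S.1 ∪ T.1 ⊆ s then (1 : ℝ) else 0), sum_boole]
  have hunion : #(S.1 \ T.1) + k = #(S.1 ∪ T.1) := by rw [← card_sdiff_add_card, T.2]
  rw [hcount, Matrix.add_apply, Matrix.smul_apply, tokenA, of_apply,
    tokenW_completeW_of_card_eq (S.2.trans T.2.symm)]
  rcases eq_or_ne S T with rfl | hne
  · have hkn : k ≤ n := by simpa [S.2] using card_le_univ S.1
    rw [union_self, card_filter_powersetCard_subset _ _ _ (subset_univ _) (by omega)]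
    simp [S.2, Nat.cast_sub hkn]
  have hdiff := card_sdiff_pos_of_card_eq (S.2.trans T.2.symm) (Subtype.coe_injective.ne hne)
  rcases eq_or_ne #(S.1 \ T.1) 1 with hone | hmany
  · rw [card_filter_powersetCard_subset _ _ _ (subset_univ _) (by omega)]
    simp [hne, hone, ← hunion]
  · rw [card_eq_zero.mpr (filter_eq_empty_iff.mpr fun A hA hUA => ?_), if_neg hmany,
      one_apply_ne hne]
    · simp
    · have := card_le_card hUA
      rw [(mem_powersetCard.mp hA).2] at this
      omega

theorem tokenA_zero {n : ℕ} (w : Fin n → Fin n → ℝ) : tokenA w 0 = 0 := by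
  ext A B
  simp [tokenA, tokenW, card_eq_zero.mp A.2]

theorem mem_spectrum_tokenA_completeW_succ_iff {n k : ℕ} (h : 2 * k + 1 < n) (x : ℝ) :
    x ∈ spectrum ℝ (tokenA (completeW n) (k + 1))
      ↔ x = -(k + 1) ∨ x + (k + 1) - (n - k) ∈ spectrum ℝ (tokenA (completeW n) k) := by
  have hcard : Fintype.card (TokenVert n k) < Fintype.card (TokenVert n (k + 1)) := by
    simpa only [Fintype.card_finset_len, Fintype.card_fin] using Nat.choose_lt_choose_succ h
  calc x ∈ spectrum ℝ (tokenA (completeW n) (k + 1))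
      ↔ x + (k + 1) ∈ spectrum ℝ (inclusionMatrix n k * (inclusionMatrix n k)ᵀ) := by
        rw [inclusionMatrix_mul_transpose, mem_spectrum_add_smul_one_iff, add_sub_cancel_right]
    _ ↔ x + (k + 1) = 0 ∨
          x + (k + 1) ∈ spectrum ℝ ((inclusionMatrix n k)ᵀ * inclusionMatrix n k) := by
        rw [spectrum_mul_comm_of_card_lt _ _ hcard, Set.mem_insert_iff]
    _ ↔ _ := by
        rw [transpose_mul_inclusionMatrix, mem_spectrum_add_smul_one_iff, eq_neg_iff_add_eq_zero]

theorem johnson_adj_spectrum_general (n k : ℕ) (hkn : 2 * k ≤ n) :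
    spectrum ℝ (tokenA (completeW n) k)
      = {x : ℝ | ∃ i : ℕ, i ≤ k ∧
          x = ((k : ℝ) - (i : ℝ)) * ((n : ℝ) - (k : ℝ) - (i : ℝ)) - (i : ℝ)} := by
  induction k with
  | zero =>
    have : Nonempty (TokenVert n 0) := ⟨⟨∅, card_empty⟩⟩
    rw [tokenA_zero, spectrum.zero_eq]
    simp
  | succ k ih =>
    ext x
    rw [mem_spectrum_tokenA_completeW_succ_iff (by omega), ih (by omega)]
    simp only [Set.mem_ofPred_eq]
    constructor
    · rintro (rfl | ⟨i, hi, hx⟩)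
      · exact ⟨k + 1, le_rfl, by push_cast; ring⟩
      · exact ⟨i, by omega, by push_cast; linarith⟩
    · rintro ⟨i, hi, rfl⟩
      rcases hi.lt_or_eq with hi | rfl
      · exact Or.inr ⟨i, by omega, by push_cast; ring⟩
      · exact Or.inl (by push_cast; ring)

/-- The adjacency eigenvalues of the `k`-th token graph of `K_n` (the Johnson graph
`J(n,k)`) are exactly `{(k-i)(n-k-i) - i : 0 ≤ i ≤ k}`. -/
theorem johnson_adj_spectrum (n k : ℕ) (hn : 2 ≤ n) (hk : 1 ≤ k) (hkn : 2 * k ≤ n) :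
    spectrum ℝ (tokenA (completeW n) k)
      = {x : ℝ | ∃ i : ℕ, i ≤ k ∧
          x = ((k : ℝ) - (i : ℝ)) * ((n : ℝ) - (k : ℝ) - (i : ℝ)) - (i : ℝ)} :=
  johnson_adj_spectrum_general n k hkn
end
end

section
/- For any n ≥ 2, the maximum eigenvalue of the Quantum MaxCut Hamiltonian on the complete graph K_n equals (n²+2n)/4 if n is even and (n²+2n-3)/4 if n is odd. -/
/-!
Write `S^P = ∑ᵢ Pᵢ` for the total Pauli operators and `C = (Sˣ)² + (Sʸ)² + (Sᶻ)²` for the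
Casimir operator. Expanding the squares gives `H(Kₙ) = ((n² + 2n) - C) / 4`, so the claim is that
the least eigenvalue of `C` is `0` for even `n` and `3` for odd `n`.

Lower bound: `C` commutes with `Sᶻ`, which is diagonal in the computational basis with entries
`n - 2k ≡ n (mod 2)`, so every eigenvalue `μ` of `C` has an eigenvector on which `Sᶻ = m` for
some `m ≡ n (mod 2)`. With the raising operator `S⁺ = Sˣ + i Sʸ` one has
`C = S⁺ᴴ S⁺ + (Sᶻ)² + 2Sᶻ = S⁺ S⁺ᴴ + (Sᶻ)² - 2Sᶻ`, and positivity of `S⁺ᴴ S⁺` and `S⁺ S⁺ᴴ` gives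
`μ ≥ m² + 2|m|`, which is at least `3` when `m` is odd.

Upper bound: a product of two-qubit singlets over `⌊n/2⌋` disjoint pairs of sites is killed by
`Pₐ + P_b` on each pair (for traceless `P`), so `S^P` acts on it as the single-site operator on the
unpaired site, if any, and `C` has eigenvalue `3 (n mod 2)` on it.
-/

open Matrix Finset

noncomputable section

namespace Matrix

variable {ι m R : Type*} [Fintype ι]

def kroneckerPi [CommSemiring R] (A : ι → Matrix m m R) : Matrix (ι → m) (ι → m) R :=
  of fun x y => ∏ l, A l (x l) (y l)

section CommSemiring

variable [CommSemiring R]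

@[simp]
theorem kroneckerPi_one [DecidableEq m] : kroneckerPi (1 : ι → Matrix m m R) = 1 := by
  ext x y
  simp [kroneckerPi, one_apply, prod_boole, funext_iff]

theorem kroneckerPi_diagonal [DecidableEq m] (d : ι → m → R) :
    kroneckerPi (fun l => diagonal (d l)) = diagonal fun x => ∏ l, d l (x l) := by
  ext x y
  simp [kroneckerPi, diagonal_apply, prod_ite_zero, funext_iff]

theorem kroneckerPi_conjTranspose [StarRing R] (A : ι → Matrix m m R) :
    (kroneckerPi A)ᴴ = kroneckerPi fun l => (A l)ᴴ := by
  ext x y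
  simp [kroneckerPi, star_prod]

variable [DecidableEq ι]

theorem kroneckerPi_mul [Fintype m] (A B : ι → Matrix m m R) :
    kroneckerPi A * kroneckerPi B = kroneckerPi (A * B) := by
  ext x y
  simp only [kroneckerPi, mul_apply, of_apply, Pi.mul_apply, ← prod_mul_distrib]
  exact (Fintype.prod_sum fun l c => A l (x l) c * B l c (y l)).symm

theorem kroneckerPi_commute [Fintype m] {A B : ι → Matrix m m R}
    (h : ∀ l, Commute (A l) (B l)) : Commute (kroneckerPi A) (kroneckerPi B) := by
  rw [commute_iff_eq, kroneckerPi_mul, kroneckerPi_mul]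
  exact congrArg kroneckerPi (funext fun l => (h l).eq)

theorem kroneckerPi_update_apply (A : ι → Matrix m m R) (i : ι) (P : Matrix m m R)
    (x y : ι → m) :
    kroneckerPi (Function.update A i P) x y
      = P (x i) (y i) * ∏ l ∈ univ \ {i}, A l (x l) (y l) := by
  simp only [kroneckerPi, of_apply,
    Function.apply_update (fun l (M : Matrix m m R) => M (x l) (y l))]
  exact prod_update_of_mem (mem_univ i) _ _

end CommSemiring

open scoped ComplexOrder in
theorem PosSemidef.nonneg_of_mulVec_eq_smul {𝕜 : Type*} [RCLike 𝕜] {M : Matrix ι ι 𝕜}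
    (hM : M.PosSemidef) {v : ι → 𝕜} (hv : v ≠ 0) {c : ℝ} (h : M *ᵥ v = (c : 𝕜) • v) : 0 ≤ c := by
  have hq := hM.dotProduct_mulVec_nonneg v
  rw [h, dotProduct_smul, smul_eq_mul] at hq
  obtain ⟨hre, him⟩ := RCLike.pos_iff.mp (dotProduct_star_self_pos_iff.mpr hv)
  have := (RCLike.nonneg_iff.mp hq).1
  rw [RCLike.re_ofReal_mul] at this
  exact nonneg_of_mul_nonneg_left this hre

variable {K : Type*} [DecidableEq ι]

theorem mem_spectrum_iff_exists_mulVec_eq_smul [Field K] {A : Matrix ι ι K} {μ : K} :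
    μ ∈ spectrum K A ↔ ∃ v, v ≠ 0 ∧ A *ᵥ v = μ • v := by
  rw [← spectrum_toLin', ← Module.End.hasEigenvalue_iff_mem_spectrum,
    Module.End.hasEigenvalue_iff, Submodule.ne_bot_iff]
  simp only [Module.End.mem_eigenspace_iff, toLin'_apply]
  exact ⟨fun ⟨v, hv, h⟩ => ⟨v, h, hv⟩, fun ⟨v, h, hv⟩ => ⟨v, hv, h⟩⟩

theorem commute_diagonal_comp [Field K] {A : Matrix ι ι K} {d : ι → K}
    (h : Commute A (diagonal d)) (f : K → K) : Commute A (diagonal (f ∘ d)) := by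
  have hoff : ∀ x y, d x ≠ d y → A x y = 0 := fun x y hxy => by
    have := congrFun (congrFun h.eq x) y
    simp only [mul_diagonal, diagonal_mul] at this
    exact (mul_eq_zero.mp (by linear_combination this : A x y * (d y - d x) = 0)).resolve_right
      (sub_ne_zero.mpr hxy.symm)
  ext x y
  simp only [mul_diagonal, diagonal_mul, Function.comp_apply]
  by_cases hxy : d x = d y
  · rw [hxy, mul_comm]
  · rw [hoff x y hxy, zero_mul, mul_zero]

theorem exists_eigenvector_of_commute_diagonal [Field K] {A : Matrix ι ι K} {d : ι → K}
    (h : Commute A (diagonal d)) {v : ι → K} (hv : v ≠ 0) {μ : K} (hAv : A *ᵥ v = μ • v) :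
    ∃ w, w ≠ 0 ∧ A *ᵥ w = μ • w ∧ ∃ x, diagonal d *ᵥ w = d x • w := by
  classical
  obtain ⟨x, hx⟩ := Function.ne_iff.mp hv
  let E : Matrix ι ι K := diagonal ((fun c => if c = d x then 1 else 0) ∘ d)
  refine ⟨E *ᵥ v, fun h0 => hx ?_, ?_, x, ?_⟩
  · simpa [E, mulVec_diagonal] using congrFun h0 x
  · rw [mulVec_mulVec, (commute_diagonal_comp h _).eq, ← mulVec_mulVec, hAv, mulVec_smul]
  · ext y
    by_cases hy : d y = d x <;> simp [E, mulVec_diagonal, hy]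

end Matrix

def singleSite (n : ℕ) (i : Fin n) (P : Matrix (Fin 2) (Fin 2) ℂ) :
    Matrix (QState n) (QState n) ℂ :=
  kroneckerPi (Function.update 1 i P)

section SingleSite
variable {n : ℕ}

theorem singleSite_apply (i : Fin n) (P : Matrix (Fin 2) (Fin 2) ℂ) (x y : QState n) :
    singleSite n i P x y
      = P (x i) (y i) * ∏ l ∈ univ \ {i}, (1 : Matrix (Fin 2) (Fin 2) ℂ) (x l) (y l) :=
  kroneckerPi_update_apply _ i P x y

theorem singleSite_sub (i : Fin n) (P Q : Matrix (Fin 2) (Fin 2) ℂ) :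
    singleSite n i (P - Q) = singleSite n i P - singleSite n i Q := by
  ext x y
  simp only [singleSite_apply, Matrix.sub_apply, sub_mul]

theorem singleSite_smul (i : Fin n) (c : ℂ) (P : Matrix (Fin 2) (Fin 2) ℂ) :
    singleSite n i (c • P) = c • singleSite n i P := by
  ext x y
  simp only [singleSite_apply, Matrix.smul_apply, smul_eq_mul, mul_assoc]

@[simp]
theorem singleSite_one (i : Fin n) : singleSite n i 1 = 1 := by
  rw [singleSite, show Function.update (1 : Fin n → Matrix (Fin 2) (Fin 2) ℂ) i 1 = 1 from
    Function.update_eq_self i 1, kroneckerPi_one]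

theorem singleSite_mul_singleSite (i : Fin n) (P Q : Matrix (Fin 2) (Fin 2) ℂ) :
    singleSite n i P * singleSite n i Q = singleSite n i (P * Q) := by
  rw [singleSite, singleSite, kroneckerPi_mul, singleSite, ← Function.update_mul, mul_one]

theorem commute_singleSite {i j : Fin n} (hij : i ≠ j) (P Q : Matrix (Fin 2) (Fin 2) ℂ) :
    Commute (singleSite n i P) (singleSite n j Q) := by
  refine kroneckerPi_commute fun l => ?_
  simp only [Function.update_apply]
  split_ifs <;> first | exact Commute.one_left _ | exact Commute.one_right _ | simp_all

theorem singleSite_mul_singleSite_of_ne {i j : Fin n} (hij : i ≠ j)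
    (P Q : Matrix (Fin 2) (Fin 2) ℂ) :
    singleSite n i P * singleSite n j Q = twoSite n i j P Q := by
  let e : Fin n → Matrix (Fin 2) (Fin 2) ℂ := 1
  have hupd : Function.update e i P * Function.update e j Q
      = Function.update (Function.update e i P) j Q := by
    ext1 l
    simp only [Pi.mul_apply, Function.update_apply]
    split_ifs <;> simp_all [e]
  ext x y
  rw [singleSite, singleSite, kroneckerPi_mul, hupd, kroneckerPi_update_apply, twoSite, of_apply,
    ← mul_prod_erase _ _ (show i ∈ univ \ {j} by simp [hij])]
  have hset : (univ \ {j}).erase i = univ \ {i, j} := by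
    ext l
    simp only [mem_erase, mem_sdiff, mem_univ, mem_insert, mem_singleton]
    tauto
  have hrest : ∀ l ∈ univ \ {i, j}, Function.update e i P l (x l) (y l)
      = if x l = y l then 1 else 0 := fun l hl => by
    rw [Function.update_of_ne (by simp at hl; tauto)]
    exact one_apply
  rw [Function.update_self, hset, prod_congr rfl hrest]
  ring

theorem singleSite_conjTranspose (i : Fin n) (P : Matrix (Fin 2) (Fin 2) ℂ) :
    (singleSite n i P)ᴴ = singleSite n i Pᴴ := by
  rw [singleSite, kroneckerPi_conjTranspose, singleSite]
  congr 1
  ext1 l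
  simp only [Function.update_apply]
  split_ifs <;> simp

theorem singleSite_diagonal (i : Fin n) (s : Fin 2 → ℂ) :
    singleSite n i (diagonal s) = diagonal fun x => s (x i) := by
  have : Function.update (1 : Fin n → Matrix (Fin 2) (Fin 2) ℂ) i (diagonal s)
      = fun l => diagonal (Function.update (1 : Fin n → Fin 2 → ℂ) i s l) := by
    ext1 l
    simp only [Function.update_apply]
    split_ifs <;> simp
  rw [singleSite, this, kroneckerPi_diagonal]
  congr 1
  ext1 x
  simp [Function.apply_update (fun l (f : Fin 2 → ℂ) => f (x l)), prod_update_of_mem]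

theorem singleSite_mulVec (i : Fin n) (P : Matrix (Fin 2) (Fin 2) ℂ) (v : QState n → ℂ)
    (x : QState n) : (singleSite n i P *ᵥ v) x = ∑ b, P (x i) b * v (Function.update x i b) := by
  have hfilter : univ.filter (fun y : QState n => ∀ l ∈ univ \ {i}, x l = y l)
      = univ.image (Function.update x i) := by
    ext y
    simp only [mem_filter, mem_univ, true_and, mem_image, mem_sdiff, mem_singleton]
    constructor
    · exact fun h => ⟨y i, funext fun l => by
        rcases eq_or_ne l i with rfl | hl
        · simp
        · simp [Function.update_of_ne hl, h l hl]⟩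
    · rintro ⟨b, rfl⟩ l hl
      simp [Function.update_of_ne hl]
  simp only [mulVec, dotProduct, singleSite_apply, one_apply, prod_boole, mul_ite, ite_mul,
    mul_one, zero_mul, mul_zero]
  rw [← sum_filter, hfilter, sum_image fun _ _ _ _ h => Function.update_injective x i h]
  simp

end SingleSite

theorem pauliX_mul_self : pauliX * pauliX = 1 := by
  ext a b; fin_cases a <;> fin_cases b <;> simp [pauliX]

theorem pauliY_mul_self : pauliY * pauliY = 1 := by
  ext a b; fin_cases a <;> fin_cases b <;> simp [pauliY]

theorem pauliZ_mul_self : pauliZ * pauliZ = 1 := by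
  ext a b; fin_cases a <;> fin_cases b <;> simp [pauliZ]

theorem pauliX_mul_pauliY_sub : pauliX * pauliY - pauliY * pauliX = (2 * Complex.I) • pauliZ := by
  ext a b; fin_cases a <;> fin_cases b <;> simp [pauliX, pauliY, pauliZ] <;> ring

theorem pauliY_mul_pauliZ_sub : pauliY * pauliZ - pauliZ * pauliY = (2 * Complex.I) • pauliX := by
  ext a b; fin_cases a <;> fin_cases b <;> simp [pauliX, pauliY, pauliZ] <;> ring

theorem pauliZ_mul_pauliX_sub : pauliZ * pauliX - pauliX * pauliZ = (2 * Complex.I) • pauliY := by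
  ext a b; fin_cases a <;> fin_cases b <;> simp [pauliX, pauliY, pauliZ] <;> ring_nf <;> simp

theorem pauliX_conjTranspose : pauliXᴴ = pauliX := by
  ext a b; fin_cases a <;> fin_cases b <;> simp [pauliX]

theorem pauliY_conjTranspose : pauliYᴴ = pauliY := by
  ext a b; fin_cases a <;> fin_cases b <;> simp [pauliY]

theorem pauliZ_eq_diagonal : pauliZ = diagonal fun b : Fin 2 => 1 - 2 * ((b : ℕ) : ℂ) := by
  ext a b; fin_cases a <;> fin_cases b <;> norm_num [pauliZ]

theorem trace_pauliX : pauliX.trace = 0 := by simp [pauliX, trace_fin_two]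
theorem trace_pauliY : pauliY.trace = 0 := by simp [pauliY, trace_fin_two]
theorem trace_pauliZ : pauliZ.trace = 0 := by simp [pauliZ, trace_fin_two]

def totalSpin (n : ℕ) (P : Matrix (Fin 2) (Fin 2) ℂ) : Matrix (QState n) (QState n) ℂ :=
  ∑ i, singleSite n i P

section TotalSpin
variable {n : ℕ}

theorem totalSpin_smul (c : ℂ) (P : Matrix (Fin 2) (Fin 2) ℂ) :
    totalSpin n (c • P) = c • totalSpin n P := by
  simp only [totalSpin, singleSite_smul, smul_sum]

theorem totalSpin_conjTranspose (P : Matrix (Fin 2) (Fin 2) ℂ) :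
    (totalSpin n P)ᴴ = totalSpin n Pᴴ := by
  simp only [totalSpin, conjTranspose_sum, singleSite_conjTranspose]

theorem totalSpin_diagonal (s : Fin 2 → ℂ) :
    totalSpin n (diagonal s) = diagonal fun x => ∑ i, s (x i) := by
  ext x y
  simp only [totalSpin, singleSite_diagonal, Matrix.sum_apply, diagonal_apply]
  split_ifs <;> simp

theorem commute_totalSpin_singleSite (P : Matrix (Fin 2) (Fin 2) ℂ) (i : Fin n) :
    Commute (totalSpin n P) (singleSite n i P) := by
  refine Commute.sum_left _ _ _ fun j _ => ?_
  rcases eq_or_ne j i with rfl | hji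
  · exact Commute.refl _
  · exact commute_singleSite hji P P

theorem totalSpin_mul_sub (P Q : Matrix (Fin 2) (Fin 2) ℂ) :
    totalSpin n P * totalSpin n Q - totalSpin n Q * totalSpin n P
      = totalSpin n (P * Q - Q * P) := by
  have hsite : ∀ i j, singleSite n i P * singleSite n j Q - singleSite n j Q * singleSite n i P
      = if i = j then singleSite n i (P * Q - Q * P) else 0 := fun i j => by
    split_ifs with hij
    · rw [hij, singleSite_mul_singleSite, singleSite_mul_singleSite, singleSite_sub]
    · rw [(commute_singleSite hij P Q).eq, sub_self]
  rw [totalSpin, totalSpin, sum_mul_sum, sum_mul_sum,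
    sum_comm (f := fun i j => singleSite n i Q * _), ← sum_sub_distrib]
  simp only [← sum_sub_distrib, hsite, sum_ite_eq, mem_univ, if_true, totalSpin]

end TotalSpin

def casimir (n : ℕ) : Matrix (QState n) (QState n) ℂ :=
  totalSpin n pauliX * totalSpin n pauliX + totalSpin n pauliY * totalSpin n pauliY
    + totalSpin n pauliZ * totalSpin n pauliZ

section Casimir
variable {n : ℕ}

theorem commute_casimir_totalSpin_pauliZ : Commute (casimir n) (totalSpin n pauliZ) := by
  set X := totalSpin n pauliX
  set Y := totalSpin n pauliY
  set Z := totalSpin n pauliZ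
  have hZX : Z * X - X * Z = (2 * Complex.I) • Y := by
    rw [totalSpin_mul_sub, pauliZ_mul_pauliX_sub, totalSpin_smul]
  have hYZ : Y * Z - Z * Y = (2 * Complex.I) • X := by
    rw [totalSpin_mul_sub, pauliY_mul_pauliZ_sub, totalSpin_smul]
  rw [commute_iff_eq, ← sub_eq_zero]
  calc casimir n * Z - Z * casimir n
      = -((Z * X - X * Z) * X + X * (Z * X - X * Z))
          + ((Y * Z - Z * Y) * Y + Y * (Y * Z - Z * Y)) := by
        simp only [casimir]; noncomm_ring
    _ = 0 := by
        rw [hZX, hYZ]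
        simp only [smul_mul_assoc, mul_smul_comm]
        abel

def raising (n : ℕ) : Matrix (QState n) (QState n) ℂ :=
  totalSpin n pauliX + Complex.I • totalSpin n pauliY

theorem raising_conjTranspose :
    (raising n)ᴴ = totalSpin n pauliX - Complex.I • totalSpin n pauliY := by
  simp [raising, totalSpin_conjTranspose, pauliX_conjTranspose, pauliY_conjTranspose,
    sub_eq_add_neg]

theorem totalSpin_pauliX_mul_pauliY : totalSpin n pauliX * totalSpin n pauliY
    = totalSpin n pauliY * totalSpin n pauliX + (2 * Complex.I) • totalSpin n pauliZ := by
  rw [← sub_eq_iff_eq_add', totalSpin_mul_sub, pauliX_mul_pauliY_sub, totalSpin_smul]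

theorem conjTranspose_raising_mul_raising : (raising n)ᴴ * raising n
    = casimir n - totalSpin n pauliZ * totalSpin n pauliZ - (2 : ℂ) • totalSpin n pauliZ := by
  rw [raising_conjTranspose, raising, casimir]
  simp only [sub_mul, mul_add, smul_mul_assoc, mul_smul_comm, totalSpin_pauliX_mul_pauliY]
  match_scalars <;> ring_nf <;> simp [Complex.I_sq]

theorem raising_mul_conjTranspose_raising : raising n * (raising n)ᴴ
    = casimir n - totalSpin n pauliZ * totalSpin n pauliZ + (2 : ℂ) • totalSpin n pauliZ := by
  rw [raising_conjTranspose, raising, casimir]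
  simp only [add_mul, mul_sub, smul_mul_assoc, mul_smul_comm, totalSpin_pauliX_mul_pauliY]
  match_scalars <;> ring_nf <;> simp [Complex.I_sq]

end Casimir

section HamiltonianCompleteGraph
variable {n : ℕ}

theorem sum_completeW_smul {M : Type*} [AddCommGroup M] [Module ℂ M] (f : Fin n → Fin n → M) :
    ∑ i, ∑ j, (completeW n i j : ℂ) • f i j = ∑ i, ∑ j, f i j - ∑ i, f i i := by
  have hoff : ∀ i j, (completeW n i j : ℂ) • f i j = f i j - if i = j then f i j else 0 := by
    intro i j
    by_cases h : i = j <;> simp [completeW, h]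
  simp only [hoff, sum_sub_distrib, sum_ite_eq, mem_univ, if_true]

theorem completeW_smul_twoSite (i j : Fin n) (P Q : Matrix (Fin 2) (Fin 2) ℂ) :
    (completeW n i j : ℂ) • twoSite n i j P Q
      = (completeW n i j : ℂ) • (singleSite n i P * singleSite n j Q) := by
  rcases eq_or_ne i j with rfl | hij
  · simp [completeW]
  · rw [singleSite_mul_singleSite_of_ne hij]

theorem HQMC_completeW :
    HQMC n (completeW n) = (1 / 4 : ℂ) • (((n : ℂ) ^ 2 + 2 * n) • 1 - casimir n) := by
  have hterm : ∀ i j, (completeW n i j : ℂ) • hQMC n i j = (1 / 2 : ℂ) • (completeW n i j : ℂ) •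
      (1 - (singleSite n i pauliX * singleSite n j pauliX
        + singleSite n i pauliY * singleSite n j pauliY
        + singleSite n i pauliZ * singleSite n j pauliZ)) := fun i j => by
    rw [hQMC, smul_comm]
    simp only [smul_sub, smul_add, completeW_smul_twoSite]
    abel
  simp only [HQMC, hterm, ← smul_sum, sum_completeW_smul, sum_sub_distrib, sum_add_distrib,
    ← sum_mul_sum, singleSite_mul_singleSite, pauliX_mul_self, pauliY_mul_self, pauliZ_mul_self,
    singleSite_one, sum_const, card_univ, Fintype.card_fin, casimir, totalSpin]
  module

theorem mem_spectrum_HQMC_completeW_iff (r : ℝ) :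
    (r : ℂ) ∈ spectrum ℂ (HQMC n (completeW n))
      ↔ (((n : ℝ) ^ 2 + 2 * n - 4 * r : ℝ) : ℂ) ∈ spectrum ℂ (casimir n) := by
  simp only [mem_spectrum_iff_exists_mulVec_eq_smul, HQMC_completeW, smul_mulVec, sub_mulVec,
    one_mulVec]
  refine exists_congr fun v => and_congr_right fun _ => ?_
  push_cast
  constructor <;> intro h
  · linear_combination (norm := module) (-4 : ℂ) • h
  · linear_combination (norm := module) (-1/4 : ℂ) • h

end HamiltonianCompleteGraph

section LowerBound
variable {n : ℕ}
open scoped ComplexOrder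

theorem totalSpin_pauliZ :
    totalSpin n pauliZ = diagonal fun x => (((n : ℤ) - 2 * ∑ i, ((x i : ℕ) : ℤ) : ℤ) : ℂ) := by
  rw [pauliZ_eq_diagonal, totalSpin_diagonal]
  push_cast
  simp [sum_sub_distrib, mul_sum]

theorem sq_add_two_mul_abs_le_of_casimir {w : QState n → ℂ} (hw : w ≠ 0) {μ m : ℝ}
    (hC : casimir n *ᵥ w = (μ : ℂ) • w) (hZ : totalSpin n pauliZ *ᵥ w = (m : ℂ) • w) :
    m ^ 2 + 2 * |m| ≤ μ := by
  have hZZ : (totalSpin n pauliZ * totalSpin n pauliZ) *ᵥ w = ((m ^ 2 : ℝ) : ℂ) • w := by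
    rw [← mulVec_mulVec, hZ, mulVec_smul, hZ, smul_smul]
    push_cast
    ring_nf
  have hlow : 0 ≤ μ - m ^ 2 - 2 * m := by
    refine (posSemidef_conjTranspose_mul_self (raising n)).nonneg_of_mulVec_eq_smul hw ?_
    rw [conjTranspose_raising_mul_raising, sub_mulVec, sub_mulVec, smul_mulVec, hC, hZZ, hZ]
    push_cast
    module
  have hhigh : 0 ≤ μ - m ^ 2 + 2 * m := by
    refine (posSemidef_self_mul_conjTranspose (raising n)).nonneg_of_mulVec_eq_smul hw ?_
    rw [raising_mul_conjTranspose_raising, add_mulVec, sub_mulVec, smul_mulVec, hC, hZZ, hZ]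
    push_cast
    module
  rcases abs_cases m with ⟨hm, -⟩ | ⟨hm, -⟩ <;> linarith

theorem casimir_eigenvalue_ge {μ : ℝ} (hμ : (μ : ℂ) ∈ spectrum ℂ (casimir n)) :
    3 * (n % 2 : ℕ) ≤ μ := by
  obtain ⟨v, hv, hCv⟩ := mem_spectrum_iff_exists_mulVec_eq_smul.mp hμ
  have hcomm := commute_casimir_totalSpin_pauliZ (n := n)
  rw [totalSpin_pauliZ] at hcomm
  obtain ⟨w, hw, hCw, x, hZw⟩ := exists_eigenvector_of_commute_diagonal hcomm hv hCv
  rw [← totalSpin_pauliZ] at hZw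
  set m : ℤ := (n : ℤ) - 2 * ∑ i, ((x i : ℕ) : ℤ)
  have hbound := sq_add_two_mul_abs_le_of_casimir hw hCw (m := m) (by exact_mod_cast hZw)
  have hparity : 3 * ((n % 2 : ℕ) : ℝ) ≤ (m : ℝ) ^ 2 + 2 * |(m : ℝ)| := by
    rcases Nat.mod_two_eq_zero_or_one n with h | h
    · rw [h]; norm_num; positivity
    · have : (1 : ℝ) ≤ |(m : ℝ)| := by exact_mod_cast Int.one_le_abs (by omega)
      rw [h]; push_cast; nlinarith [sq_abs (m : ℝ)]
  linarith

end LowerBound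

def sitePairing (n : ℕ) : Fin (n / 2) × Fin 2 ⊕ Fin (n % 2) ≃ Fin n :=
  Fintype.equivFinOfCardEq (by simp [Nat.div_add_mod'])

def epsilon : Matrix (Fin 2) (Fin 2) ℂ := !![0, 1; -1, 0]

-- The linearization of `A ε Aᵀ = det A • ε`: the singlet is invariant under `SU(2)`.
theorem mul_epsilon_add_epsilon_mul_transpose (P : Matrix (Fin 2) (Fin 2) ℂ) :
    P * epsilon + epsilon * Pᵀ = P.trace • epsilon := by
  ext a b
  fin_cases a <;> fin_cases b <;>
    simp [epsilon, trace_fin_two, mul_apply, vecMul, dotProduct, Fin.sum_univ_two]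

def singletState (n : ℕ) : QState n → ℂ := fun x =>
  ∏ k : Fin (n / 2), epsilon (x (sitePairing n (.inl (k, 0)))) (x (sitePairing n (.inl (k, 1))))

section Singlet
variable {n : ℕ}

theorem singleSite_add_singleSite_mulVec_singlet {a b : Fin n} (hab : a ≠ b) {R : QState n → ℂ}
    (hRa : ∀ x c, R (Function.update x a c) = R x) (hRb : ∀ x c, R (Function.update x b c) = R x)
    (P : Matrix (Fin 2) (Fin 2) ℂ) :
    (singleSite n a P + singleSite n b P) *ᵥ (fun x => epsilon (x a) (x b) * R x)
      = P.trace • fun x => epsilon (x a) (x b) * R x := by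
  ext x
  have key := congrFun (congrFun (mul_epsilon_add_epsilon_mul_transpose P) (x a)) (x b)
  simp only [Matrix.add_apply, mul_apply, transpose_apply, Matrix.smul_apply, smul_eq_mul] at key
  simp only [add_mulVec, Pi.add_apply, singleSite_mulVec, Function.update_self,
    Function.update_of_ne hab, Function.update_of_ne hab.symm, hRa, hRb, Pi.smul_apply, smul_eq_mul]
  rw [← mul_assoc, ← key, add_mul, sum_mul, sum_mul]
  congr 1 <;> exact sum_congr rfl fun c _ => by ring

theorem singletState_ne_zero : singletState n ≠ 0 := by
  let x : QState n := fun i => Sum.elim Prod.snd (fun _ => 0) ((sitePairing n).symm i)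
  refine Function.ne_iff.mpr ⟨x, ?_⟩
  simp [singletState, x, epsilon]

theorem pair_mulVec_singletState {P : Matrix (Fin 2) (Fin 2) ℂ} (hP : P.trace = 0)
    (k : Fin (n / 2)) :
    (singleSite n (sitePairing n (.inl (k, 0))) P + singleSite n (sitePairing n (.inl (k, 1))) P)
      *ᵥ singletState n = 0 := by
  set e := sitePairing n
  have hne : ∀ {p q : Fin (n / 2) × Fin 2}, p ≠ q → e (.inl p) ≠ e (.inl q) := fun h =>
    e.injective.ne (Sum.inl_injective.ne h)
  set R : QState n → ℂ := fun x =>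
    ∏ k' ∈ univ.erase k, epsilon (x (e (.inl (k', 0)))) (x (e (.inl (k', 1))))
  have hR : ∀ b x c, R (Function.update x (e (.inl (k, b))) c) = R x := fun b x c =>
    prod_congr rfl fun k' hk' => by
      have hk : k' ≠ k := ne_of_mem_erase hk'
      rw [Function.update_of_ne (hne (by simp [hk])), Function.update_of_ne (hne (by simp [hk]))]
  have hsplit : singletState n
      = fun x => epsilon (x (e (.inl (k, 0)))) (x (e (.inl (k, 1)))) * R x :=
    funext fun x => (mul_prod_erase _ _ (mem_univ k)).symm
  rw [hsplit, singleSite_add_singleSite_mulVec_singlet (hne (by simp)) (hR 0) (hR 1), hP,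
    zero_smul]

theorem totalSpin_mulVec_singletState {P : Matrix (Fin 2) (Fin 2) ℂ} (hP : P.trace = 0) :
    totalSpin n P *ᵥ singletState n
      = (∑ r, singleSite n (sitePairing n (.inr r)) P) *ᵥ singletState n := by
  rw [totalSpin, sum_mulVec, sum_mulVec, ← (sitePairing n).sum_comp, Fintype.sum_sum_type,
    Fintype.sum_prod_type]
  simp only [Fin.sum_univ_two, ← add_mulVec, pair_mulVec_singletState hP, sum_const_zero,
    zero_add]

theorem totalSpin_mul_self_mulVec_singletState {P : Matrix (Fin 2) (Fin 2) ℂ} (hP : P.trace = 0)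
    (hP2 : P * P = 1) :
    (totalSpin n P * totalSpin n P) *ᵥ singletState n = ((n % 2 : ℕ) : ℂ) • singletState n := by
  set U := ∑ r, singleSite n (sitePairing n (.inr r)) P
  have hcomm : Commute (totalSpin n P) U :=
    Commute.sum_right _ _ _ fun r _ => commute_totalSpin_singleSite P _
  have hUU : U * U = ((n % 2 : ℕ) : ℂ) • 1 := by
    have : Subsingleton (Fin (n % 2)) := Fin.subsingleton_iff_le_one.mpr (by omega)
    rw [sum_mul_sum, Fintype.sum_congr _ _ fun r => Fintype.sum_subsingleton _ r]
    simp only [singleSite_mul_singleSite, hP2, singleSite_one, sum_const, card_univ,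
      Fintype.card_fin, Nat.cast_smul_eq_nsmul]
  rw [← mulVec_mulVec, totalSpin_mulVec_singletState hP, mulVec_mulVec, hcomm.eq, ← mulVec_mulVec,
    totalSpin_mulVec_singletState hP, mulVec_mulVec, hUU, smul_mulVec, one_mulVec]

theorem casimir_mulVec_singletState :
    casimir n *ᵥ singletState n = ((3 * (n % 2 : ℕ) : ℝ) : ℂ) • singletState n := by
  rw [casimir, add_mulVec, add_mulVec,
    totalSpin_mul_self_mulVec_singletState trace_pauliX pauliX_mul_self,
    totalSpin_mul_self_mulVec_singletState trace_pauliY pauliY_mul_self,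
    totalSpin_mul_self_mulVec_singletState trace_pauliZ pauliZ_mul_self]
  push_cast
  module

end Singlet

theorem complete_QMC_maxEig_general (n : ℕ) :
    maxEigH (HQMC n (completeW n))
      = if Even n then ((n : ℝ) ^ 2 + 2 * (n : ℝ)) / 4
        else ((n : ℝ) ^ 2 + 2 * (n : ℝ) - 3) / 4 := by
  have hvalue : (if Even n then ((n : ℝ) ^ 2 + 2 * (n : ℝ)) / 4
      else ((n : ℝ) ^ 2 + 2 * (n : ℝ) - 3) / 4) = ((n : ℝ) ^ 2 + 2 * n - 3 * (n % 2 : ℕ)) / 4 := by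
    rcases Nat.even_or_odd n with h | h
    · simp [h, Nat.even_iff.mp h]
    · simp [Nat.not_even_iff_odd.mpr h, Nat.odd_iff.mp h]
  rw [hvalue, maxEigH]
  refine IsGreatest.csSup_eq ⟨?_, fun r hr => ?_⟩
  · refine (mem_spectrum_HQMC_completeW_iff _).mpr (mem_spectrum_iff_exists_mulVec_eq_smul.mpr
      ⟨singletState n, singletState_ne_zero, ?_⟩)
    rw [casimir_mulVec_singletState]
    ring_nf
  · have := casimir_eigenvalue_ge ((mem_spectrum_HQMC_completeW_iff r).mp hr)
    linarith

/-- Maximum eigenvalue of the Quantum MaxCut Hamiltonian on the complete graph `K_n`: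
`(n² + 2n)/4` for even `n`, and `(n² + 2n - 3)/4` for odd `n`. -/
theorem complete_QMC_maxEig (n : ℕ) (hn : 2 ≤ n) :
    maxEigH (HQMC n (completeW n))
      = if Even n then ((n : ℝ) ^ 2 + 2 * (n : ℝ)) / 4
        else ((n : ℝ) ^ 2 + 2 * (n : ℝ) - 3) / 4 :=
  complete_QMC_maxEig_general n
end
end
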